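/- arXiv:2508.12763 — 3 statements merged into one kernel-verified Lean document; each statement's English description precedes it below -/
import Mathlib

section
/- Let k ≥ 2 be an integer and let F be a (k-1)-dimensional simplicial complex with at most 2 maximal edges. Then F is trivial: for all sufficiently large n, ex(n,F) = ex_k^{cl+}(n,F^k) + Σ_{r=0}^{k-1} C(n,r). -/
open Filter Asymptotics

/-- A finite hypergraph with vertices in `ℕ`. -/
structure NatHypergraph where
  verts : Finset ℕ
  edges : Finset (Finset ℕ)
  subset_verts : ∀ e ∈ edges, e ⊆ verts

namespace NatHypergraph

/-- `G` is `k`-uniform if every edge has exactly `k` vertices. -/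
def IsUniform (G : NatHypergraph) (k : ℕ) : Prop := ∀ e ∈ G.edges, e.card = k

/-- `H` contains a copy of `F`: an injection of `V(F)` into `V(H)` mapping
every edge of `F` to an edge of `H`. -/
def ContainsCopy (H F : NatHypergraph) : Prop :=
  ∃ f : ℕ → ℕ, Set.InjOn f ↑F.verts ∧ (∀ v ∈ F.verts, f v ∈ H.verts) ∧
    ∀ e ∈ F.edges, e.image f ∈ H.edges

/-- `F` is isomorphic to `G`. -/
def IsIsoTo (F G : NatHypergraph) : Prop :=
  ∃ f : ℕ → ℕ, Set.InjOn f ↑F.verts ∧ F.verts.image f = G.verts ∧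
    F.edges.image (Finset.image f) = G.edges

/-- The `s`-th layer `F^s`: the `s`-uniform hypergraph on `V(F)` consisting of all
`s`-element edges of `F`. -/
def layer (F : NatHypergraph) (s : ℕ) : NatHypergraph where
  verts := F.verts
  edges := F.edges.filter fun e => e.card = s
  subset_verts := fun e he => F.subset_verts e (Finset.mem_filter.mp he).1

/-- The set of maximal edges (the generating set) of `F`. -/
def maximalEdges (F : NatHypergraph) : Finset (Finset ℕ) :=
  F.edges.filter fun e => ∀ e' ∈ F.edges, e ⊆ e' → e = e'

/-- `T` forms a clique in the `k`-uniform hypergraph `G`: `T` is a singleton,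
`T` is a subset of some edge, or every `k`-element subset of `T` is an edge. -/
def IsCliqueIn (G : NatHypergraph) (k : ℕ) (T : Finset ℕ) : Prop :=
  T ⊆ G.verts ∧ (T.card = 1 ∨ (∃ e ∈ G.edges, T ⊆ e) ∨
    ∀ S ∈ T.powersetCard k, S ∈ G.edges)

/-- The number of cliques in `G` (viewed as a `k`-uniform hypergraph). -/
noncomputable def cliqueCount (G : NatHypergraph) (k : ℕ) : ℕ :=
  Set.ncard {T : Finset ℕ | G.IsCliqueIn k T}

/-- The number of cliques of order at least `k` in `G`. -/
noncomputable def cliquePlusCount (G : NatHypergraph) (k : ℕ) : ℕ :=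
  Set.ncard {T : Finset ℕ | G.IsCliqueIn k T ∧ k ≤ T.card}

/-- `F` is `d`-dimensional: the maximum edge size is `d + 1`. -/
def IsDimensional (F : NatHypergraph) (d : ℕ) : Prop :=
  (∀ e ∈ F.edges, e.card ≤ d + 1) ∧ ∃ e ∈ F.edges, e.card = d + 1

/-- `H` is edge-degenerate: its edges can be ordered `e₁, …, eₘ` so that for every
`i ≥ 2` there is `j < i` with `eᵢ ∩ (e₁ ∪ ⋯ ∪ e_{i-1}) ⊆ eⱼ`. -/
def EdgeDegenerate (H : NatHypergraph) : Prop :=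
  ∃ l : List (Finset ℕ), l.Nodup ∧ l.toFinset = H.edges ∧
    ∀ i : Fin l.length, 1 ≤ (i : ℕ) →
      ∃ j : Fin l.length, (j : ℕ) < (i : ℕ) ∧
        l.get i ∩ (l.take (i : ℕ)).foldr (· ∪ ·) ∅ ⊆ l.get j

/-- `G` is `l`-full (as a `k`-uniform hypergraph): every `(k-1)`-element vertex subset
is contained in either none or at least `l` edges. -/
def IsFull (G : NatHypergraph) (l k : ℕ) : Prop :=
  ∀ S ⊆ G.verts, S.card = k - 1 →
    (G.edges.filter fun e => S ⊆ e) = ∅ ∨ l ≤ (G.edges.filter fun e => S ⊆ e).card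

end NatHypergraph

/-- An abstract simplicial complex: contains the empty edge, all singletons of its
vertex set, and is closed under taking subsets. -/
def IsSimplicialComplex (H : NatHypergraph) : Prop :=
  ∅ ∈ H.edges ∧ (∀ v ∈ H.verts, {v} ∈ H.edges) ∧
    ∀ e ∈ H.edges, ∀ e', e' ⊆ e → e' ∈ H.edges

/-- `𝓓(H)`: the simplicial complex on `V(H)` whose edges are all singletons together
with all subsets of edges of `H`. -/
def downClosure (H : NatHypergraph) : NatHypergraph where
  verts := H.verts
  edges := insert ∅ ((H.verts.image fun v => ({v} : Finset ℕ)) ∪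
    H.edges.biUnion Finset.powerset)
  subset_verts := by
    intro e he
    simp only [Finset.mem_insert, Finset.mem_union, Finset.mem_image, Finset.mem_biUnion,
      Finset.mem_powerset] at he
    rcases he with rfl | ⟨v, hv, rfl⟩ | ⟨a, ha, hea⟩
    · exact Finset.empty_subset _
    · exact Finset.singleton_subset_iff.mpr hv
    · exact hea.trans (H.subset_verts a ha)

/-- The simplicial complex generated by a finite family `E` of edges: its vertex set is
the union of the members of `E` and its edges are all subsets of members of `E`. -/
def genComplex (E : Finset (Finset ℕ)) : NatHypergraph where
  verts := E.sup id
  edges := insert ∅ (E.biUnion Finset.powerset)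
  subset_verts := by
    intro e he
    simp only [Finset.mem_insert, Finset.mem_biUnion, Finset.mem_powerset] at he
    rcases he with rfl | ⟨a, ha, hea⟩
    · exact Finset.empty_subset _
    · intro x hx
      exact Finset.mem_sup.mpr ⟨a, ha, hea hx⟩

/-- `ex(n, F)`: the maximum number of edges in an `F`-free simplicial complex
on `n` vertices. -/
noncomputable def exSC (n : ℕ) (F : NatHypergraph) : ℕ :=
  sSup {m | ∃ H : NatHypergraph, IsSimplicialComplex H ∧ H.verts.card = n ∧
    ¬ H.ContainsCopy F ∧ H.edges.card = m}

/-- `ex_k^{cl}(n, 𝓗)`: the maximum number of cliques in an `n`-vertex `k`-uniform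
hypergraph containing no copy of any member of `𝓗`. -/
noncomputable def exCl (k n : ℕ) (HF : Set NatHypergraph) : ℕ :=
  sSup {m | ∃ G : NatHypergraph, G.IsUniform k ∧ G.verts.card = n ∧
    (∀ H ∈ HF, ¬ G.ContainsCopy H) ∧ G.cliqueCount k = m}

/-- `ex_k^{cl+}(n, 𝓗)`: the maximum number of cliques of order at least `k` in an
`n`-vertex `k`-uniform hypergraph containing no copy of any member of `𝓗`. -/
noncomputable def exClPlus (k n : ℕ) (HF : Set NatHypergraph) : ℕ :=
  sSup {m | ∃ G : NatHypergraph, G.IsUniform k ∧ G.verts.card = n ∧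
    (∀ H ∈ HF, ¬ G.ContainsCopy H) ∧ G.cliquePlusCount k = m}

/-- `N(T, G)`: the number of copies of `T` in `G`, i.e. the number of subhypergraphs
of `G` (given by a vertex set and an edge set) that are images of `T` under an injection. -/
noncomputable def copyCount (T G : NatHypergraph) : ℕ :=
  Set.ncard {p : Finset ℕ × Finset (Finset ℕ) |
    ∃ f : ℕ → ℕ, Set.InjOn f ↑T.verts ∧ (∀ v ∈ T.verts, f v ∈ G.verts) ∧
      (∀ e ∈ T.edges, e.image f ∈ G.edges) ∧
      T.verts.image f = p.1 ∧ T.edges.image (Finset.image f) = p.2}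

/-- `ex_k(n, T, 𝓗)`: the maximum number of copies of `T` in an `n`-vertex `k`-uniform
hypergraph containing no copy of any member of `𝓗`. -/
noncomputable def exGen (k n : ℕ) (T : NatHypergraph) (HF : Set NatHypergraph) : ℕ :=
  sSup {m | ∃ G : NatHypergraph, G.IsUniform k ∧ G.verts.card = n ∧
    (∀ H ∈ HF, ¬ G.ContainsCopy H) ∧ copyCount T G = m}

/-- A `(k-1)`-dimensional simplicial complex `F` is trivial if for all sufficiently
large `n`, `ex(n,F) = ex_k^{cl+}(n, F^k) + ∑_{r=0}^{k-1} C(n,r)`. -/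
def IsTrivialSC (k : ℕ) (F : NatHypergraph) : Prop :=
  ∀ᶠ n in atTop, exSC n F = exClPlus k n {F.layer k} + ∑ r ∈ Finset.range k, n.choose r

/-- The `k`-uniform matching `M^k_t` with `t` pairwise disjoint edges. -/
def matchingHG (k t : ℕ) : NatHypergraph where
  verts := Finset.range (t * k)
  edges := (Finset.range t).image fun i => (Finset.range k).image fun j => i * k + j
  subset_verts := by
    intro e he
    simp only [Finset.mem_image, Finset.mem_range] at he
    obtain ⟨i, hi, rfl⟩ := he
    intro x hx
    simp only [Finset.mem_image, Finset.mem_range] at hx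
    obtain ⟨j, hj, rfl⟩ := hx
    simp only [Finset.mem_range]
    calc i * k + j < i * k + k := by omega
      _ = (i + 1) * k := by ring
      _ ≤ t * k := Nat.mul_le_mul (by omega) le_rfl

/-- The `i`-th edge of the `k`-uniform linear cycle of length `t`. -/
def cycleEdge (k t i : ℕ) : Finset ℕ :=
  (Finset.range k).image fun j => (i * (k - 1) + j) % (t * (k - 1))

/-- The `k`-uniform linear cycle `C^k_t` of length `t`. -/
def linearCycleHG (k t : ℕ) : NatHypergraph where
  verts := (Finset.range t).sup (cycleEdge k t)
  edges := (Finset.range t).image (cycleEdge k t)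
  subset_verts := by
    intro e he
    simp only [Finset.mem_image] at he
    obtain ⟨i, hi, rfl⟩ := he
    intro x hx
    exact Finset.mem_sup.mpr ⟨i, hi, hx⟩

/-- The `k`-uniform linear path `P^k_t` of length `t` (obtained from `C^k_{t+1}` by
deleting one edge). -/
def linearPathHG (k t : ℕ) : NatHypergraph where
  verts := (Finset.range t).sup (cycleEdge k (t + 1))
  edges := (Finset.range t).image (cycleEdge k (t + 1))
  subset_verts := by
    intro e he
    simp only [Finset.mem_image] at he
    obtain ⟨i, hi, rfl⟩ := he
    intro x hx
    exact Finset.mem_sup.mpr ⟨i, hi, hx⟩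

/-- The `k`-uniform tight path `TP^k_t` of length `t`, on vertices `{0, …, k+t-2}`. -/
def tightPathHG (k t : ℕ) : NatHypergraph where
  verts := Finset.range (k + t - 1)
  edges := (Finset.range t).image fun i => (Finset.range k).image fun j => i + j
  subset_verts := by
    intro e he
    simp only [Finset.mem_image, Finset.mem_range] at he
    obtain ⟨i, hi, rfl⟩ := he
    intro x hx
    simp only [Finset.mem_image, Finset.mem_range] at hx
    obtain ⟨j, hj, rfl⟩ := hx
    simp only [Finset.mem_range]
    omega

/-- The complete `k`-uniform hypergraph `K^k_r` on `r` vertices. -/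
def completeHG (k r : ℕ) : NatHypergraph where
  verts := Finset.range r
  edges := (Finset.range r).powersetCard k
  subset_verts := fun _ he => (Finset.mem_powersetCard.mp he).1

/-- The star `S^k_{n,l}`: the `n`-vertex `k`-uniform hypergraph whose edges are all
`k`-element subsets meeting a fixed set of `l` vertices. -/
def starHG (k n l : ℕ) : NatHypergraph where
  verts := Finset.range n
  edges := ((Finset.range n).powersetCard k).filter fun e => ∃ v ∈ e, v < l
  subset_verts := fun _ he => (Finset.mem_powersetCard.mp (Finset.mem_filter.mp he).1).1


namespace TrivialAux

open Finset

/-! ### Generic counting lemmas -/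

lemma filter_card_lt_eq_biUnion (V : Finset ℕ) (k : ℕ) :
    (V.powerset.filter (fun e => e.card < k)) =
      (Finset.range k).biUnion (fun r => V.powersetCard r) := by
  ext e
  simp only [Finset.mem_filter, Finset.mem_powerset, Finset.mem_biUnion, Finset.mem_range,
    Finset.mem_powersetCard]
  constructor
  · rintro ⟨h1, h2⟩; exact ⟨e.card, h2, h1, rfl⟩
  · rintro ⟨r, hr, h1, rfl⟩; exact ⟨h1, hr⟩

lemma card_filter_card_lt (V : Finset ℕ) (k : ℕ) :
    (V.powerset.filter (fun e => e.card < k)).card = ∑ r ∈ Finset.range k, V.card.choose r := by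
  rw [filter_card_lt_eq_biUnion, Finset.card_biUnion]
  · exact Finset.sum_congr rfl fun r _ => Finset.card_powersetCard r V
  · intro i hi j hj hij
    simp only [Finset.disjoint_left, Finset.mem_powersetCard]
    rintro a ⟨_, h1⟩ ⟨_, h2⟩
    exact hij (h1 ▸ h2)

lemma edges_card_le (H : NatHypergraph) : H.edges.card ≤ 2 ^ H.verts.card := by
  calc H.edges.card ≤ H.verts.powerset.card :=
        Finset.card_le_card (fun e he => Finset.mem_powerset.2 (H.subset_verts e he))
    _ = 2 ^ H.verts.card := Finset.card_powerset _

lemma exSC_bddAbove (n : ℕ) (F : NatHypergraph) :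
    BddAbove {m | ∃ H : NatHypergraph, IsSimplicialComplex H ∧ H.verts.card = n ∧
      ¬ H.ContainsCopy F ∧ H.edges.card = m} := by
  refine ⟨2 ^ n, ?_⟩
  rintro m ⟨H, _, hn, _, rfl⟩
  simpa [hn] using edges_card_le H

lemma exClPlus_bddAbove (k n : ℕ) (HF : Set NatHypergraph) :
    BddAbove {m | ∃ G : NatHypergraph, G.IsUniform k ∧ G.verts.card = n ∧
      (∀ H ∈ HF, ¬ G.ContainsCopy H) ∧ G.cliquePlusCount k = m} := by
  refine ⟨2 ^ n, ?_⟩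
  rintro m ⟨G, _, hn, _, rfl⟩
  have : {T : Finset ℕ | G.IsCliqueIn k T ∧ k ≤ T.card} ⊆ ↑G.verts.powerset := by
    rintro T ⟨⟨hT, _⟩, _⟩
    exact Finset.mem_coe.2 (Finset.mem_powerset.2 hT)
  calc NatHypergraph.cliquePlusCount G k ≤ (G.verts.powerset : Set (Finset ℕ)).ncard :=
        Set.ncard_le_ncard this (G.verts.powerset : Finset (Finset ℕ)).finite_toSet
    _ = G.verts.powerset.card := Set.ncard_coe_finset _
    _ = 2 ^ n := by rw [Finset.card_powerset, hn]

/-! ### Structure of `F` -/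

lemma exists_maximal_superset (F : NatHypergraph) {e : Finset ℕ} (he : e ∈ F.edges) :
    ∃ m ∈ F.maximalEdges, e ⊆ m := by
  have hne : (F.edges.filter (fun e' => e ⊆ e')).Nonempty := ⟨e, by simp [he]⟩
  obtain ⟨m, hm, hmax⟩ : ∃ m ∈ F.edges.filter (fun e' => e ⊆ e'),
      ∀ x ∈ F.edges.filter (fun e' => e ⊆ e'), ¬ m < x := by
    obtain ⟨m, hm⟩ := Finset.exists_maximal hne
    exact ⟨m, hm.prop, fun x hx hlt => absurd (hm.2 hx hlt.le) (not_le_of_gt hlt)⟩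
  simp only [Finset.mem_filter] at hm
  refine ⟨m, Finset.mem_filter.2 ⟨hm.1, fun e' he' hsub => ?_⟩, hm.2⟩
  by_contra hne'
  exact hmax e' (Finset.mem_filter.2 ⟨he', hm.2.trans hsub⟩) (lt_of_le_of_ne hsub hne')

lemma structureF (k : ℕ) (hk : 2 ≤ k) (F : NatHypergraph)
    (hF : IsSimplicialComplex F) (hdim : F.IsDimensional (k - 1))
    (hcard : F.maximalEdges.card ≤ 2) :
    ∃ E1 E2 : Finset ℕ, E1 ∈ F.edges ∧ E2 ∈ F.edges ∧ E1.card = k ∧ E2.card ≤ k ∧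
      F.verts = E1 ∪ E2 ∧ (∀ e ∈ F.edges, e ⊆ E1 ∨ e ⊆ E2) ∧
      (∀ e, e ⊆ E1 → e ∈ F.edges) ∧ (∀ e, e ⊆ E2 → e ∈ F.edges) ∧
      (E2.card < k → ¬ E2 ⊆ E1) := by
  have hk1 : k - 1 + 1 = k := by omega
  obtain ⟨huble, e0, he0, he0c⟩ := hdim
  rw [hk1] at he0c
  obtain ⟨E1, hE1m, hE1sub⟩ := exists_maximal_superset F he0
  have hE1mem : E1 ∈ F.edges := (Finset.mem_filter.1 hE1m).1
  have hE1card : E1.card = k := by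
    have h1 : E1.card ≤ k := by have := huble E1 hE1mem; omega
    have h2 : k ≤ E1.card := he0c ▸ Finset.card_le_card hE1sub
    omega
  have hE1eq : e0 = E1 := Finset.eq_of_subset_of_card_le hE1sub (by omega)
  -- choose E2
  by_cases hsingle : F.maximalEdges ⊆ {E1}
  · refine ⟨E1, E1, hE1mem, hE1mem, hE1card, le_of_eq hE1card, ?_, ?_, ?_, ?_, by omega⟩
    · apply Finset.Subset.antisymm
      · intro v hv
        obtain ⟨m, hm, hvm⟩ := exists_maximal_superset F (hF.2.1 v hv)
        have : m = E1 := Finset.mem_singleton.1 (hsingle hm)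
        subst this
        have := hvm (Finset.mem_singleton_self v)
        simp [Finset.mem_union, this]
      · simp only [Finset.union_self]
        exact F.subset_verts E1 hE1mem
    · intro e he
      obtain ⟨m, hm, hem⟩ := exists_maximal_superset F he
      have : m = E1 := Finset.mem_singleton.1 (hsingle hm)
      exact Or.inl (this ▸ hem)
    · exact fun e he => hF.2.2 E1 hE1mem e he
    · exact fun e he => hF.2.2 E1 hE1mem e he
  · obtain ⟨E2, hE2m⟩ : ∃ E2, E2 ∈ F.maximalEdges \ {E1} := by
      by_contra h
      push_neg at h
      refine hsingle fun m hm => ?_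
      by_contra hne
      exact h m (Finset.mem_sdiff.2 ⟨hm, hne⟩)
    have hE2max : E2 ∈ F.maximalEdges := (Finset.mem_sdiff.1 hE2m).1
    have hE2ne : E2 ≠ E1 := by
      have := (Finset.mem_sdiff.1 hE2m).2; simpa using this
    have hE2mem : E2 ∈ F.edges := (Finset.mem_filter.1 hE2max).1
    have hME : F.maximalEdges = {E1, E2} := by
      have hsub2 : ({E1, E2} : Finset (Finset ℕ)) ⊆ F.maximalEdges :=
        Finset.insert_subset hE1m (Finset.singleton_subset_iff.2 hE2max)
      have hcard2 : F.maximalEdges.card ≤ ({E1, E2} : Finset (Finset ℕ)).card := by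
        rw [Finset.card_insert_of_notMem (by simpa using hE2ne.symm), Finset.card_singleton]
        exact hcard
      apply Finset.Subset.antisymm
      · exact le_of_eq (Finset.eq_of_subset_of_card_le hsub2 hcard2).symm
      · intro m hm
        rcases Finset.mem_insert.1 hm with rfl | hm2
        · exact hE1m
        · rw [Finset.mem_singleton] at hm2; subst hm2; exact hE2max
    refine ⟨E1, E2, hE1mem, hE2mem, hE1card, by have := huble E2 hE2mem; omega, ?_, ?_, ?_, ?_, ?_⟩
    · apply Finset.Subset.antisymm
      · intro v hv
        obtain ⟨m, hm, hvm⟩ := exists_maximal_superset F (hF.2.1 v hv)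
        rw [hME] at hm
        have hvmem := hvm (Finset.mem_singleton_self v)
        rcases Finset.mem_insert.1 hm with rfl | hm2
        · exact Finset.mem_union_left _ hvmem
        · rw [Finset.mem_singleton] at hm2; subst hm2
          exact Finset.mem_union_right _ hvmem
      · exact Finset.union_subset (F.subset_verts E1 hE1mem) (F.subset_verts E2 hE2mem)
    · intro e he
      obtain ⟨m, hm, hem⟩ := exists_maximal_superset F he
      rw [hME] at hm
      rcases Finset.mem_insert.1 hm with rfl | hm2
      · exact Or.inl hem
      · rw [Finset.mem_singleton] at hm2; subst hm2; exact Or.inr hem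
    · exact fun e he => hF.2.2 E1 hE1mem e he
    · exact fun e he => hF.2.2 E2 hE2mem e he
    · intro _ hsub
      exact hE2ne ((Finset.mem_filter.1 hE2max).2 E1 hE1mem hsub)

open scoped Classical

lemma caseB (k : ℕ) (hk : 2 ≤ k) (F : NatHypergraph) (E1 E2 : Finset ℕ)
    (hE1e : E1 ∈ F.edges) (hE2e : E2 ∈ F.edges) (hE1c : E1.card = k) (hE2c : E2.card = k)
    (hverts : F.verts = E1 ∪ E2) (hsplit : ∀ e ∈ F.edges, e ⊆ E1 ∨ e ⊆ E2)
    (n : ℕ) :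
    exSC n F = exClPlus k n {F.layer k} + ∑ r ∈ Finset.range k, n.choose r := by
  have hE1layer : E1 ∈ (F.layer k).edges := Finset.mem_filter.2 ⟨hE1e, hE1c⟩
  have hE2layer : E2 ∈ (F.layer k).edges := Finset.mem_filter.2 ⟨hE2e, hE2c⟩
  -- upper bound
  have hupper : ∀ m ∈ {m | ∃ H : NatHypergraph, IsSimplicialComplex H ∧ H.verts.card = n ∧
      ¬ H.ContainsCopy F ∧ H.edges.card = m},
      m ≤ exClPlus k n {F.layer k} + ∑ r ∈ Finset.range k, n.choose r := by
    rintro m ⟨H, hH, hn, hfree, rfl⟩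
    have hGuni : (H.layer k).IsUniform k := fun e he => (Finset.mem_filter.1 he).2
    have hGfree : ¬ (H.layer k).ContainsCopy (F.layer k) := by
      rintro ⟨f, hinj, hmapv, hmape⟩
      apply hfree
      refine ⟨f, hinj, hmapv, ?_⟩
      intro e he
      have hmapE1 : E1.image f ∈ H.edges := (Finset.mem_filter.1 (hmape E1 hE1layer)).1
      have hmapE2 : E2.image f ∈ H.edges := (Finset.mem_filter.1 (hmape E2 hE2layer)).1
      rcases hsplit e he with hsub | hsub
      · exact hH.2.2 _ hmapE1 _ (Finset.image_subset_image hsub)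
      · exact hH.2.2 _ hmapE2 _ (Finset.image_subset_image hsub)
    have hsplitcard : (H.edges.filter (fun e => e.card < k)).card
        + (H.edges.filter (fun e => ¬ e.card < k)).card = H.edges.card :=
      Finset.card_filter_add_card_filter_not (s := H.edges) (p := fun e => e.card < k)
    have hsmall : (H.edges.filter (fun e => e.card < k)).card ≤ ∑ r ∈ Finset.range k, n.choose r := by
      have hsub : H.edges.filter (fun e => e.card < k) ⊆
          H.verts.powerset.filter (fun e => e.card < k) := by
        intro e he
        rw [Finset.mem_filter] at he ⊢
        exact ⟨Finset.mem_powerset.2 (H.subset_verts e he.1), he.2⟩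
      calc (H.edges.filter (fun e => e.card < k)).card
          ≤ (H.verts.powerset.filter (fun e => e.card < k)).card := Finset.card_le_card hsub
        _ = ∑ r ∈ Finset.range k, n.choose r := by rw [card_filter_card_lt, hn]
    have hbig : (H.edges.filter (fun e => ¬ e.card < k)).card ≤ exClPlus k n {F.layer k} := by
      have hsubcl : (↑(H.edges.filter (fun e => ¬ e.card < k)) : Set (Finset ℕ)) ⊆
          {T : Finset ℕ | (H.layer k).IsCliqueIn k T ∧ k ≤ T.card} := by
        intro T hT
        rw [Finset.mem_coe, Finset.mem_filter] at hT
        obtain ⟨hTe, hTc⟩ := hT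
        refine ⟨⟨H.subset_verts T hTe, Or.inr (Or.inr ?_)⟩, by omega⟩
        intro S hS
        rw [Finset.mem_powersetCard] at hS
        exact Finset.mem_filter.2 ⟨hH.2.2 T hTe S hS.1, hS.2⟩
      have hfin : {T : Finset ℕ | (H.layer k).IsCliqueIn k T ∧ k ≤ T.card}.Finite := by
        apply Set.Finite.subset (H.verts.powerset : Finset (Finset ℕ)).finite_toSet
        rintro T ⟨⟨hT, _⟩, _⟩
        exact Finset.mem_coe.2 (Finset.mem_powerset.2 hT)
      have h1 : (H.edges.filter (fun e => ¬ e.card < k)).card ≤ (H.layer k).cliquePlusCount k := by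
        rw [← Set.ncard_coe_finset]
        exact Set.ncard_le_ncard hsubcl hfin
      refine h1.trans (le_csSup (exClPlus_bddAbove k n _) ?_)
      refine ⟨H.layer k, hGuni, hn, ?_, rfl⟩
      intro H' hH'
      rw [Set.mem_singleton_iff] at hH'
      subst hH'
      exact hGfree
    rw [← hsplitcard]
    calc (H.edges.filter (fun e => e.card < k)).card
        + (H.edges.filter (fun e => ¬ e.card < k)).card
        ≤ (∑ r ∈ Finset.range k, n.choose r) + exClPlus k n {F.layer k} :=
          Nat.add_le_add hsmall hbig
      _ = _ := Nat.add_comm _ _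
  -- extremal G for exClPlus
  have hSne : {m | ∃ G : NatHypergraph, G.IsUniform k ∧ G.verts.card = n ∧
      (∀ H' ∈ ({F.layer k} : Set NatHypergraph), ¬ G.ContainsCopy H') ∧ G.cliquePlusCount k = m}.Nonempty := by
    refine ⟨(NatHypergraph.mk (Finset.range n) ∅ (by simp)).cliquePlusCount k,
      NatHypergraph.mk (Finset.range n) ∅ (by simp), ?_, by simp, ?_, rfl⟩
    · intro e he; simp at he
    · rintro H' hH' ⟨f, hinj, hmapv, hmape⟩
      rw [Set.mem_singleton_iff] at hH'; subst hH'
      simpa using hmape E1 hE1layer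
  obtain ⟨G, hGuni, hGcard, hGfree, hGcount⟩ :=
    Nat.sSup_mem hSne (exClPlus_bddAbove k n {F.layer k})
  -- construct the extremal simplicial complex
  set Small : Finset (Finset ℕ) := G.verts.powerset.filter (fun e => e.card < k) with hSmallDef
  set BigC : Finset (Finset ℕ) :=
    G.verts.powerset.filter (fun T => G.IsCliqueIn k T ∧ k ≤ T.card) with hBigCDef
  have hsubv : ∀ e ∈ Small ∪ BigC, e ⊆ G.verts := by
    intro e he
    rcases Finset.mem_union.1 he with h | h
    · exact Finset.mem_powerset.1 (Finset.mem_filter.1 h).1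
    · exact Finset.mem_powerset.1 (Finset.mem_filter.1 h).1
  set H : NatHypergraph := ⟨G.verts, Small ∪ BigC, hsubv⟩ with hHdef
  have hHedges : H.edges = Small ∪ BigC := rfl
  have hHverts : H.verts = G.verts := rfl
  have hHsc : IsSimplicialComplex H := by
    refine ⟨?_, ?_, ?_⟩
    · rw [hHedges]
      apply Finset.mem_union_left
      rw [hSmallDef, Finset.mem_filter, Finset.mem_powerset]
      constructor
      · exact Finset.empty_subset _
      · simp; omega
    · intro v hv
      rw [hHedges]
      apply Finset.mem_union_left
      rw [hSmallDef, Finset.mem_filter, Finset.mem_powerset]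
      refine ⟨Finset.singleton_subset_iff.2 hv, by simp; omega⟩
    · intro e he e' he'
      rw [hHedges] at he ⊢
      have he'v : e' ⊆ G.verts := he'.trans (hsubv e he)
      by_cases hc : e'.card < k
      · exact Finset.mem_union_left _ (Finset.mem_filter.2 ⟨Finset.mem_powerset.2 he'v, hc⟩)
      · apply Finset.mem_union_right
        rcases Finset.mem_union.1 he with h | h
        · exfalso
          have := (Finset.mem_filter.1 h).2
          have := Finset.card_le_card he'
          omega
        · obtain ⟨hpow, hcl, hkc⟩ := Finset.mem_filter.1 h
          rw [hBigCDef, Finset.mem_filter, Finset.mem_powerset]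
          refine ⟨he'v, ⟨he'v, ?_⟩, by omega⟩
          rcases hcl.2 with h1 | h2 | h3
          · exfalso; have := Finset.card_le_card he'; omega
          · obtain ⟨g, hg, hsubg⟩ := h2
            exact Or.inr (Or.inl ⟨g, hg, he'.trans hsubg⟩)
          · refine Or.inr (Or.inr ?_)
            intro S hS
            rw [Finset.mem_powersetCard] at hS
            exact h3 S (Finset.mem_powersetCard.2 ⟨hS.1.trans he', hS.2⟩)
  have hHfree : ¬ H.ContainsCopy F := by
    rintro ⟨f, hinj, hmapv, hmape⟩
    have hedge_mem : ∀ E : Finset ℕ, E ∈ F.edges → E.card = k → E.image f ∈ G.edges := by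
      intro E hEe hEc
      have hEsub : (E : Set ℕ) ⊆ ↑F.verts := by
        rw [hverts]
        intro x hx
        rcases hsplit E hEe with h | h
        · exact Finset.mem_coe.2 (Finset.mem_union_left _ (h hx))
        · exact Finset.mem_coe.2 (Finset.mem_union_right _ (h hx))
      have hcardim : (E.image f).card = k := by
        rw [Finset.card_image_of_injOn (hinj.mono hEsub), hEc]
      have hmem := hmape E hEe
      rw [hHedges] at hmem
      rcases Finset.mem_union.1 hmem with h | h
      · exfalso
        have := (Finset.mem_filter.1 h).2
        omega
      · obtain ⟨hpow, hcl, hkc⟩ := Finset.mem_filter.1 h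
        rcases hcl.2 with h1 | h2 | h3
        · omega
        · obtain ⟨g, hg, hsubg⟩ := h2
          have hgc : g.card = k := hGuni g hg
          have : E.image f = g := Finset.eq_of_subset_of_card_le hsubg (by omega)
          rw [this]; exact hg
        · exact h3 _ (Finset.mem_powersetCard.2 ⟨Finset.Subset.refl _, hcardim⟩)
    apply hGfree (F.layer k) (Set.mem_singleton _)
    refine ⟨f, hinj, hmapv, ?_⟩
    intro e he
    obtain ⟨hee, hec⟩ := Finset.mem_filter.1 he
    exact hedge_mem e hee hec
  -- count the edges of H
  have hdisj : Disjoint Small BigC := by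
    rw [Finset.disjoint_left]
    intro a ha hb
    have h1 := (Finset.mem_filter.1 ha).2
    have h2 := (Finset.mem_filter.1 hb).2.2
    omega
  have hcount : H.edges.card = (∑ r ∈ Finset.range k, n.choose r) + G.cliquePlusCount k := by
    rw [hHedges, Finset.card_union_of_disjoint hdisj]
    congr 1
    · rw [hSmallDef, card_filter_card_lt, hGcard]
    · have : {T : Finset ℕ | G.IsCliqueIn k T ∧ k ≤ T.card} = ↑BigC := by
        ext T
        simp only [Set.mem_setOf_eq, hBigCDef, Finset.coe_filter, Finset.mem_powerset,
          Set.mem_setOf_eq]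
        constructor
        · rintro ⟨hcl, hc⟩; exact ⟨hcl.1, hcl, hc⟩
        · rintro ⟨_, hcl, hc⟩; exact ⟨hcl, hc⟩
      rw [NatHypergraph.cliquePlusCount, this, Set.ncard_coe_finset]
  have hmemlow : exClPlus k n {F.layer k} + (∑ r ∈ Finset.range k, n.choose r) ∈
      {m | ∃ H : NatHypergraph, IsSimplicialComplex H ∧ H.verts.card = n ∧
      ¬ H.ContainsCopy F ∧ H.edges.card = m} := by
    refine ⟨H, hHsc, by rw [hHverts, hGcard], hHfree, ?_⟩
    rw [hcount]
    unfold exClPlus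
    rw [← hGcount]
    exact Nat.add_comm _ _
  exact le_antisymm (csSup_le ⟨_, hmemlow⟩ hupper) (le_csSup (exSC_bddAbove n F) hmemlow)

/-! ### Building injections -/

lemma exists_bij_fun (P A : Finset ℕ) (h : P.card = A.card) :
    ∃ f : ℕ → ℕ, Set.InjOn f ↑P ∧ P.image f = A := by
  have hcard : Fintype.card ↥(P : Finset ℕ) = Fintype.card ↥(A : Finset ℕ) := by
    rw [Fintype.card_coe, Fintype.card_coe, h]
  obtain ⟨e⟩ := Fintype.card_eq.1 hcard
  refine ⟨fun x => if hx : x ∈ P then (e ⟨x, hx⟩ : ℕ) else 0, ?_, ?_⟩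
  · intro x hx y hy hxy
    rw [Finset.mem_coe] at hx hy
    simp only [dif_pos hx, dif_pos hy] at hxy
    have := e.injective (Subtype.ext hxy)
    exact congrArg Subtype.val this
  · ext y
    simp only [Finset.mem_image]
    constructor
    · rintro ⟨x, hx, rfl⟩
      simp only [dif_pos hx]
      exact (e ⟨x, hx⟩).2
    · intro hy
      refine ⟨(e.symm ⟨y, hy⟩ : ℕ), (e.symm ⟨y, hy⟩).2, ?_⟩
      rw [dif_pos (e.symm ⟨y, hy⟩).2]
      have hxx : (⟨((e.symm ⟨y, hy⟩ : ↥P) : ℕ), (e.symm ⟨y, hy⟩).2⟩ : ↥P) = e.symm ⟨y, hy⟩ :=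
        Subtype.ext rfl
      rw [hxx, Equiv.apply_symm_apply]

lemma exists_glue3 (P1 P2 P3 A1 A2 A3 : Finset ℕ)
    (h12 : Disjoint P1 P2) (h13 : Disjoint P1 P3) (h23 : Disjoint P2 P3)
    (g12 : Disjoint A1 A2) (g13 : Disjoint A1 A3) (g23 : Disjoint A2 A3)
    (c1 : P1.card = A1.card) (c2 : P2.card = A2.card) (c3 : P3.card = A3.card) :
    ∃ f : ℕ → ℕ, Set.InjOn f ↑(P1 ∪ P2 ∪ P3) ∧
      P1.image f = A1 ∧ P2.image f = A2 ∧ P3.image f = A3 := by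
  obtain ⟨f1, hinj1, him1⟩ := exists_bij_fun P1 A1 c1
  obtain ⟨f2, hinj2, him2⟩ := exists_bij_fun P2 A2 c2
  obtain ⟨f3, hinj3, him3⟩ := exists_bij_fun P3 A3 c3
  set f : ℕ → ℕ := fun x => if x ∈ P1 then f1 x else if x ∈ P2 then f2 x else f3 x with hf
  have hv1 : ∀ x ∈ P1, f x = f1 x := fun x hx => by simp [hf, hx]
  have hv2 : ∀ x ∈ P2, f x = f2 x := fun x hx => by
    have : x ∉ P1 := Finset.disjoint_right.1 h12 hx
    simp [hf, this, hx]
  have hv3 : ∀ x ∈ P3, f x = f3 x := fun x hx => by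
    have h1 : x ∉ P1 := Finset.disjoint_right.1 h13 hx
    have h2 : x ∉ P2 := Finset.disjoint_right.1 h23 hx
    simp [hf, h1, h2]
  have hm1 : P1.image f = A1 := by
    rw [← him1]; exact Finset.image_congr (fun x hx => hv1 x hx)
  have hm2 : P2.image f = A2 := by
    rw [← him2]; exact Finset.image_congr (fun x hx => hv2 x hx)
  have hm3 : P3.image f = A3 := by
    rw [← him3]; exact Finset.image_congr (fun x hx => hv3 x hx)
  refine ⟨f, ?_, hm1, hm2, hm3⟩
  intro x hx y hy hxy
  rw [Finset.coe_union, Finset.coe_union] at hx hy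
  have hmem : ∀ z, z ∈ P1 ∪ P2 ∪ P3 → (z ∈ P1 ∨ z ∈ P2 ∨ z ∈ P3) := by
    intro z hz
    rcases Finset.mem_union.1 hz with hz | hz
    · rcases Finset.mem_union.1 hz with hz | hz
      · exact Or.inl hz
      · exact Or.inr (Or.inl hz)
    · exact Or.inr (Or.inr hz)
  have hfx : ∀ z, z ∈ P1 ∨ z ∈ P2 ∨ z ∈ P3 → f z ∈ A1 ∨ f z ∈ A2 ∨ f z ∈ A3 := by
    rintro z (hz | hz | hz)
    · exact Or.inl (hm1 ▸ Finset.mem_image_of_mem f hz)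
    · exact Or.inr (Or.inl (hm2 ▸ Finset.mem_image_of_mem f hz))
    · exact Or.inr (Or.inr (hm3 ▸ Finset.mem_image_of_mem f hz))
  have hx' : x ∈ P1 ∨ x ∈ P2 ∨ x ∈ P3 := by
    rcases hx with h | h
    · rcases h with h | h
      · exact Or.inl h
      · exact Or.inr (Or.inl h)
    · exact Or.inr (Or.inr h)
  have hy' : y ∈ P1 ∨ y ∈ P2 ∨ y ∈ P3 := by
    rcases hy with h | h
    · rcases h with h | h
      · exact Or.inl h
      · exact Or.inr (Or.inl h)
    · exact Or.inr (Or.inr h)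
  rcases hx' with hx1 | hx2 | hx3 <;> rcases hy' with hy1 | hy2 | hy3
  · exact hinj1 hx1 hy1 (by rwa [hv1 x hx1, hv1 y hy1] at hxy)
  · exfalso
    have h1 : f x ∈ A1 := hm1 ▸ Finset.mem_image_of_mem f hx1
    have h2 : f y ∈ A2 := hm2 ▸ Finset.mem_image_of_mem f hy2
    exact Finset.disjoint_left.1 g12 h1 (hxy ▸ h2)
  · exfalso
    have h1 : f x ∈ A1 := hm1 ▸ Finset.mem_image_of_mem f hx1
    have h2 : f y ∈ A3 := hm3 ▸ Finset.mem_image_of_mem f hy3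
    exact Finset.disjoint_left.1 g13 h1 (hxy ▸ h2)
  · exfalso
    have h1 : f x ∈ A2 := hm2 ▸ Finset.mem_image_of_mem f hx2
    have h2 : f y ∈ A1 := hm1 ▸ Finset.mem_image_of_mem f hy1
    exact Finset.disjoint_left.1 g12 h2 (hxy ▸ h1)
  · exact hinj2 hx2 hy2 (by rwa [hv2 x hx2, hv2 y hy2] at hxy)
  · exfalso
    have h1 : f x ∈ A2 := hm2 ▸ Finset.mem_image_of_mem f hx2
    have h2 : f y ∈ A3 := hm3 ▸ Finset.mem_image_of_mem f hy3
    exact Finset.disjoint_left.1 g23 h1 (hxy ▸ h2)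
  · exfalso
    have h1 : f x ∈ A3 := hm3 ▸ Finset.mem_image_of_mem f hx3
    have h2 : f y ∈ A1 := hm1 ▸ Finset.mem_image_of_mem f hy1
    exact Finset.disjoint_left.1 g13 h2 (hxy ▸ h1)
  · exfalso
    have h1 : f x ∈ A3 := hm3 ▸ Finset.mem_image_of_mem f hx3
    have h2 : f y ∈ A2 := hm2 ▸ Finset.mem_image_of_mem f hy2
    exact Finset.disjoint_left.1 g23 h2 (hxy ▸ h1)
  · exact hinj3 hx3 hy3 (by rwa [hv3 x hx3, hv3 y hy3] at hxy)

lemma star_lemma (k : ℕ) (F : NatHypergraph) (E1 E2 : Finset ℕ) (hE1c : E1.card = k)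
    (hverts : F.verts = E1 ∪ E2) (hsplit : ∀ e ∈ F.edges, e ⊆ E1 ∨ e ⊆ E2)
    (H : NatHypergraph) (hH : IsSimplicialComplex H) (hfree : ¬ H.ContainsCopy F)
    (e : Finset ℕ) (he : e ∈ H.edges) (hec : e.card = k)
    (A : Finset ℕ) (hA : A ⊆ e) (hAc : A.card = (E1 ∩ E2).card)
    (B : Finset ℕ) (hB : B ⊆ H.verts \ e) (hBc : B.card = E2.card - (E1 ∩ E2).card) :
    A ∪ B ∉ H.edges := by
  intro hABmem
  have hBdisj : Disjoint B e := by
    rw [Finset.disjoint_left]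
    intro x hx hxe
    exact (Finset.mem_sdiff.1 (hB hx)).2 hxe
  have hP1card : (E1 ∩ E2).card ≤ E2.card := Finset.card_le_card Finset.inter_subset_right
  have hc2 : (E1 \ E2).card = (e \ A).card := by
    have h1 : (E1 \ E2).card + (E1 ∩ E2).card = E1.card := Finset.card_sdiff_add_card_inter E1 E2
    have h2 : (e \ A).card = e.card - A.card := Finset.card_sdiff_of_subset hA
    have h3 : A.card ≤ e.card := Finset.card_le_card hA
    omega
  have hc3 : (E2 \ E1).card = B.card := by
    have h1 : (E2 \ E1).card + (E2 ∩ E1).card = E2.card := Finset.card_sdiff_add_card_inter E2 E1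
    have h2 : (E2 ∩ E1).card = (E1 ∩ E2).card := by rw [Finset.inter_comm]
    omega
  obtain ⟨f, hinj, hm1, hm2, hm3⟩ := exists_glue3 (E1 ∩ E2) (E1 \ E2) (E2 \ E1) A (e \ A) B
    (by rw [Finset.disjoint_left]; intro x hx hx2
        exact (Finset.mem_sdiff.1 hx2).2 (Finset.mem_inter.1 hx).2)
    (by rw [Finset.disjoint_left]; intro x hx hx2
        exact (Finset.mem_sdiff.1 hx2).2 (Finset.mem_inter.1 hx).1)
    (by rw [Finset.disjoint_left]; intro x hx hx2
        exact (Finset.mem_sdiff.1 hx2).2 (Finset.mem_sdiff.1 hx).1)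
    (Finset.disjoint_sdiff)
    (by rw [Finset.disjoint_left]; intro x hx hx2
        exact Finset.disjoint_left.1 hBdisj hx2 (hA hx))
    (by rw [Finset.disjoint_left]; intro x hx hx2
        exact Finset.disjoint_left.1 hBdisj hx2 (Finset.mem_sdiff.1 hx).1)
    hAc.symm hc2 hc3
  have hsplitsets : E1 ∩ E2 ∪ E1 \ E2 ∪ E2 \ E1 = E1 ∪ E2 := by
    ext x
    simp only [Finset.mem_union, Finset.mem_inter, Finset.mem_sdiff]
    tauto
  have hE1eq : E1 ∩ E2 ∪ E1 \ E2 = E1 := by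
    ext x
    simp only [Finset.mem_union, Finset.mem_inter, Finset.mem_sdiff]
    tauto
  have hE2eq : E1 ∩ E2 ∪ E2 \ E1 = E2 := by
    ext x
    simp only [Finset.mem_union, Finset.mem_inter, Finset.mem_sdiff]
    tauto
  have himE1 : E1.image f = e := by
    rw [← hE1eq, Finset.image_union, hm1, hm2, Finset.union_sdiff_of_subset hA]
  have himE2 : E2.image f = A ∪ B := by
    rw [← hE2eq, Finset.image_union, hm1, hm3]
  apply hfree
  refine ⟨f, ?_, ?_, ?_⟩
  · rw [hverts, ← hsplitsets]
    exact hinj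
  · intro v hv
    rw [hverts, ← hsplitsets] at hv
    have hev : e ⊆ H.verts := H.subset_verts e he
    rcases Finset.mem_union.1 hv with hv' | hv3
    · rcases Finset.mem_union.1 hv' with hv1 | hv2
      · have : f v ∈ A := hm1 ▸ Finset.mem_image_of_mem f hv1
        exact hev (hA this)
      · have : f v ∈ e \ A := hm2 ▸ Finset.mem_image_of_mem f hv2
        exact hev (Finset.mem_sdiff.1 this).1
    · have : f v ∈ B := hm3 ▸ Finset.mem_image_of_mem f hv3
      exact (Finset.mem_sdiff.1 (hB this)).1
  · intro d hd
    rcases hsplit d hd with hsub | hsub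
    · exact hH.2.2 e he _ (himE1 ▸ Finset.image_subset_image hsub)
    · exact hH.2.2 _ hABmem _ (himE2 ▸ Finset.image_subset_image hsub)

lemma diamond_lemma (k : ℕ) (F : NatHypergraph) (E1 E2 : Finset ℕ) (hE1c : E1.card = k)
    (hverts : F.verts = E1 ∪ E2) (hsplit : ∀ e ∈ F.edges, e ⊆ E1 ∨ e ⊆ E2)
    (hE2lt : E2.card < k) (hE2s : (E1 ∩ E2).card < E2.card)
    (H : NatHypergraph) (hH : IsSimplicialComplex H) (hfree : ¬ H.ContainsCopy F)
    (b b' : Finset ℕ) (hb : b ∈ H.edges) (hb' : b' ∈ H.edges)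
    (hbk : k ≤ b.card) (hbk' : k ≤ b'.card)
    (hI : (E1 ∩ E2).card ≤ (b ∩ b').card) :
    (b ∪ b').card < k + (E2.card - (E1 ∩ E2).card) := by
  set t := (E1 ∩ E2).card with ht
  set σ := E2.card - t with hσ
  by_contra hU
  push_neg at hU
  have htle : t ≤ E2.card := Finset.card_le_card Finset.inter_subset_right
  have hσ1 : 1 ≤ σ := by omega
  have htk : t + σ < k := by omega
  obtain ⟨A₀, hA₀sub, hA₀c⟩ := Finset.exists_subset_card_eq hI
  have hA₀b : A₀ ⊆ b := hA₀sub.trans Finset.inter_subset_left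
  have hA₀b' : A₀ ⊆ b' := hA₀sub.trans Finset.inter_subset_right
  have hbb' : (b \ b').card + (b ∩ b').card = b.card := Finset.card_sdiff_add_card_inter b b'
  have hbub : (b \ b').card + b'.card = (b ∪ b').card := Finset.card_sdiff_add_card b b'
  obtain ⟨e, e', A, B, hesub, hec, he'sub, he'c, hAe, hAe', hAc, hBe', hBnote, hBc⟩ :
      ∃ e e' A B : Finset ℕ, e ⊆ b ∧ e.card = k ∧ e' ⊆ b' ∧ e'.card = k ∧
        A ⊆ e ∧ A ⊆ e' ∧ A.card = t ∧ B ⊆ e' ∧ Disjoint B e ∧ B.card = σ := by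
    by_cases hcase : k - t ≤ (b \ b').card
    · -- Case 1
      obtain ⟨P, hPsub, hPc⟩ := Finset.exists_subset_card_eq hcase
      have hPdisj : Disjoint A₀ P := by
        rw [Finset.disjoint_left]
        intro x hx hxP
        exact (Finset.mem_sdiff.1 (hPsub hxP)).2 (hA₀b' hx)
      have hec : (A₀ ∪ P).card = k := by
        rw [Finset.card_union_of_disjoint hPdisj, hA₀c, hPc]
        omega
      obtain ⟨e', hA₀e', he'sub, he'c⟩ :=
        Finset.exists_subsuperset_card_eq hA₀b' (by omega : A₀.card ≤ k) hbk'
      have hint : e' ∩ (A₀ ∪ P) ⊆ A₀ := by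
        intro x hx
        rw [Finset.mem_inter] at hx
        rcases Finset.mem_union.1 hx.2 with h | h
        · exact h
        · exact absurd (he'sub hx.1) (Finset.mem_sdiff.1 (hPsub h)).2
      have hsdc : σ ≤ (e' \ (A₀ ∪ P)).card := by
        have h1 : (e' \ (A₀ ∪ P)).card + (e' ∩ (A₀ ∪ P)).card = e'.card :=
          Finset.card_sdiff_add_card_inter e' (A₀ ∪ P)
        have h2 : (e' ∩ (A₀ ∪ P)).card ≤ t := hA₀c ▸ Finset.card_le_card hint
        omega
      obtain ⟨B, hBsub, hBc⟩ := Finset.exists_subset_card_eq hsdc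
      refine ⟨A₀ ∪ P, e', A₀, B, ?_, hec, he'sub, he'c, Finset.subset_union_left, hA₀e', hA₀c,
        ?_, ?_, hBc⟩
      · exact Finset.union_subset hA₀b (hPsub.trans (Finset.sdiff_subset))
      · exact fun x hx => (Finset.mem_sdiff.1 (hBsub hx)).1
      · rw [Finset.disjoint_left]
        intro x hx hxe
        exact (Finset.mem_sdiff.1 (hBsub hx)).2 hxe
    · -- Case 2
      push_neg at hcase
      have havail : k - t - (b \ b').card ≤ ((b ∩ b') \ A₀).card := by
        have h1 : ((b ∩ b') \ A₀).card = (b ∩ b').card - t := by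
          rw [Finset.card_sdiff_of_subset hA₀sub, hA₀c]
        omega
      obtain ⟨Q, hQsub, hQc⟩ := Finset.exists_subset_card_eq havail
      have hQb' : Q ⊆ b' := fun x hx =>
        Finset.inter_subset_right ((Finset.mem_sdiff.1 (hQsub hx)).1)
      have hQb : Q ⊆ b := fun x hx =>
        Finset.inter_subset_left ((Finset.mem_sdiff.1 (hQsub hx)).1)
      have hQA₀ : Disjoint Q A₀ := by
        rw [Finset.disjoint_left]
        exact fun x hx hx2 => (Finset.mem_sdiff.1 (hQsub hx)).2 hx2
      set e : Finset ℕ := (b \ b') ∪ A₀ ∪ Q with he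
      have hd1 : Disjoint (b \ b') A₀ := by
        rw [Finset.disjoint_left]
        exact fun x hx hx2 => (Finset.mem_sdiff.1 hx).2 (hA₀b' hx2)
      have hd2 : Disjoint ((b \ b') ∪ A₀) Q := by
        rw [Finset.disjoint_left]
        intro x hx hxQ
        rcases Finset.mem_union.1 hx with h | h
        · exact (Finset.mem_sdiff.1 h).2 (hQb' hxQ)
        · exact Finset.disjoint_right.1 hQA₀ h hxQ
      have hecard : e.card = k := by
        rw [he, Finset.card_union_of_disjoint hd2, Finset.card_union_of_disjoint hd1,
          hA₀c, hQc]
        omega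
      have hesub : e ⊆ b := by
        rw [he]
        exact Finset.union_subset (Finset.union_subset Finset.sdiff_subset hA₀b) hQb
      have hA₀e : A₀ ⊆ e := by
        rw [he]
        exact fun x hx => Finset.mem_union_left _ (Finset.mem_union_right _ hx)
      have hb'inter : b' ∩ e = A₀ ∪ Q := by
        ext x
        rw [he]
        simp only [Finset.mem_inter, Finset.mem_union, Finset.mem_sdiff]
        constructor
        · rintro ⟨hxb', (⟨_, hnb'⟩ | h) | h⟩
          · exact absurd hxb' hnb'
          · exact Or.inl h
          · exact Or.inr h
        · rintro (h | h)
          · exact ⟨hA₀b' h, Or.inl (Or.inr h)⟩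
          · exact ⟨hQb' h, Or.inr h⟩
      have hb'ecard : (b' \ e).card = (b ∪ b').card - k := by
        have h1 : (b' \ e).card + (b' ∩ e).card = b'.card := Finset.card_sdiff_add_card_inter b' e
        have h2 : (b' ∩ e).card = t + Q.card := by
          rw [hb'inter, Finset.card_union_of_disjoint hQA₀.symm, hA₀c]
        omega
      have hb'eσ : σ ≤ (b' \ e).card := by omega
      by_cases hcase2 : k - t ≤ (b' \ e).card
      · obtain ⟨R, hRsub, hRc⟩ := Finset.exists_subset_card_eq hcase2
        have hRdisj : Disjoint A₀ R := by
          rw [Finset.disjoint_left]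
          exact fun x hx hxR => (Finset.mem_sdiff.1 (hRsub hxR)).2 (hA₀e hx)
        have he'c : (A₀ ∪ R).card = k := by
          rw [Finset.card_union_of_disjoint hRdisj, hA₀c, hRc]
          omega
        obtain ⟨B, hBsub, hBc⟩ := Finset.exists_subset_card_eq
          (show σ ≤ R.card by omega)
        refine ⟨e, A₀ ∪ R, A₀, B, hesub, hecard, ?_, he'c, hA₀e, Finset.subset_union_left,
          hA₀c, ?_, ?_, hBc⟩
        · exact Finset.union_subset hA₀b' (hRsub.trans Finset.sdiff_subset)
        · exact fun x hx => Finset.mem_union_right _ (hBsub hx)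
        · rw [Finset.disjoint_left]
          exact fun x hx hxe => (Finset.mem_sdiff.1 (hRsub (hBsub hx))).2 hxe
      · push_neg at hcase2
        have havail2 : k - t - (b' \ e).card ≤ ((b' ∩ e) \ A₀).card := by
          have hA₀be : A₀ ⊆ b' ∩ e := fun x hx => Finset.mem_inter.2 ⟨hA₀b' hx, hA₀e hx⟩
          have h1 : ((b' ∩ e) \ A₀).card = (b' ∩ e).card - t := by
            rw [Finset.card_sdiff_of_subset hA₀be, hA₀c]
          have h2 : (b' ∩ e).card + (b' \ e).card = b'.card := by
            have := Finset.card_sdiff_add_card_inter b' e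
            omega
          omega
        obtain ⟨S, hSsub, hSc⟩ := Finset.exists_subset_card_eq havail2
        have hSb' : S ⊆ b' := fun x hx =>
          Finset.inter_subset_left ((Finset.mem_sdiff.1 (hSsub hx)).1)
        have hSe : S ⊆ e := fun x hx =>
          Finset.inter_subset_right ((Finset.mem_sdiff.1 (hSsub hx)).1)
        have hSA₀ : Disjoint S A₀ := by
          rw [Finset.disjoint_left]
          exact fun x hx hx2 => (Finset.mem_sdiff.1 (hSsub hx)).2 hx2
        set e' : Finset ℕ := (b' \ e) ∪ A₀ ∪ S with he'
        have hd1' : Disjoint (b' \ e) A₀ := by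
          rw [Finset.disjoint_left]
          exact fun x hx hx2 => (Finset.mem_sdiff.1 hx).2 (hA₀e hx2)
        have hd2' : Disjoint ((b' \ e) ∪ A₀) S := by
          rw [Finset.disjoint_left]
          intro x hx hxS
          rcases Finset.mem_union.1 hx with h | h
          · exact (Finset.mem_sdiff.1 h).2 (hSe hxS)
          · exact Finset.disjoint_right.1 hSA₀ h hxS
        have he'card : e'.card = k := by
          rw [he', Finset.card_union_of_disjoint hd2', Finset.card_union_of_disjoint hd1',
            hA₀c, hSc]
          omega
        have he'sub : e' ⊆ b' := by
          rw [he']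
          exact Finset.union_subset (Finset.union_subset Finset.sdiff_subset hA₀b') hSb'
        obtain ⟨B, hBsub, hBc⟩ := Finset.exists_subset_card_eq hb'eσ
        refine ⟨e, e', A₀, B, hesub, hecard, he'sub, he'card, hA₀e, ?_, hA₀c, ?_, ?_, hBc⟩
        · rw [he']
          exact fun x hx => Finset.mem_union_left _ (Finset.mem_union_right _ hx)
        · rw [he']
          exact fun x hx => Finset.mem_union_left _ (Finset.mem_union_left _ (hBsub hx))
        · rw [Finset.disjoint_left]
          exact fun x hx hxe => (Finset.mem_sdiff.1 (hBsub hx)).2 hxe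
  -- now derive the contradiction via star_lemma
  have he_edge : e ∈ H.edges := hH.2.2 b hb e hesub
  have he'_edge : e' ∈ H.edges := hH.2.2 b' hb' e' he'sub
  have hAB_edge : A ∪ B ∈ H.edges := hH.2.2 e' he'_edge _ (Finset.union_subset hAe' hBe')
  have hBverts : B ⊆ H.verts \ e := by
    intro x hx
    rw [Finset.mem_sdiff]
    exact ⟨H.subset_verts e' he'_edge (hBe' hx), Finset.disjoint_left.1 hBnote hx⟩
  exact star_lemma k F E1 E2 hE1c hverts hsplit H hH hfree e he_edge hec A hAe hAc B hBverts hBc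
    hAB_edge

lemma cluster_bound (V : Finset ℕ) (k σ : ℕ) (𝒞 : Finset (Finset ℕ))
    (hsubV : ∀ b ∈ 𝒞, b ⊆ V) (hbk : ∀ b ∈ 𝒞, k ≤ b.card)
    (hpair : ∀ b ∈ 𝒞, ∀ b' ∈ 𝒞, (b ∪ b').card < k + σ) :
    𝒞.card ≤ 2 ^ (k + σ) * (V.powerset.filter (fun e => e.card < σ)).card := by
  rcases 𝒞.eq_empty_or_nonempty with rfl | ⟨b₁, hb₁⟩
  · simp
  have hmap : ∀ b ∈ 𝒞, (b ∩ b₁, b \ b₁) ∈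
      b₁.powerset ×ˢ (V.powerset.filter (fun e => e.card < σ)) := by
    intro b hb
    rw [Finset.mem_product]
    dsimp only
    constructor
    · exact Finset.mem_powerset.2 Finset.inter_subset_right
    · rw [Finset.mem_filter, Finset.mem_powerset]
      refine ⟨Finset.sdiff_subset.trans (hsubV b hb), ?_⟩
      have h1 : (b \ b₁).card + b₁.card = (b ∪ b₁).card := Finset.card_sdiff_add_card b b₁
      have h2 := hpair b hb b₁ hb₁
      have h3 := hbk b₁ hb₁
      omega
  have hinj : Set.InjOn (fun b => (b ∩ b₁, b \ b₁)) ↑𝒞 := by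
    intro x hx y hy hxy
    simp only [Prod.mk.injEq] at hxy
    have hxr : x = (x ∩ b₁) ∪ (x \ b₁) := by
      ext a
      simp only [Finset.mem_union, Finset.mem_inter, Finset.mem_sdiff]
      tauto
    have hyr : y = (y ∩ b₁) ∪ (y \ b₁) := by
      ext a
      simp only [Finset.mem_union, Finset.mem_inter, Finset.mem_sdiff]
      tauto
    rw [hxr, hyr, hxy.1, hxy.2]
  calc 𝒞.card ≤ (b₁.powerset ×ˢ (V.powerset.filter (fun e => e.card < σ))).card :=
        Finset.card_le_card_of_injOn _ hmap hinj
    _ = 2 ^ b₁.card * (V.powerset.filter (fun e => e.card < σ)).card := by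
        rw [Finset.card_product, Finset.card_powerset]
    _ ≤ 2 ^ (k + σ) * (V.powerset.filter (fun e => e.card < σ)).card := by
        apply Nat.mul_le_mul_right
        apply Nat.pow_le_pow_right (by omega)
        have h2 := hpair b₁ hb₁ b₁ hb₁
        simp only [Finset.union_self] at h2
        omega

lemma binom_aux (k σ c : ℕ) (hσ : 1 ≤ σ) :
    ∃ N, ∀ n, N ≤ n → c * (∑ r ∈ Finset.range σ, n.choose r) ≤ (n - k).choose σ := by
  set c' := c * σ * σ.factorial + 1 with hc'
  refine ⟨2 * (k + σ) + c' * 2 ^ σ + 2, fun n hn => ?_⟩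
  have hn1 : 1 ≤ n := by omega
  have hsum : (∑ r ∈ Finset.range σ, n.choose r) ≤ σ * n ^ (σ - 1) := by
    calc ∑ r ∈ Finset.range σ, n.choose r ≤ ∑ _r ∈ Finset.range σ, n ^ (σ - 1) := by
          apply Finset.sum_le_sum
          intro r hr
          rw [Finset.mem_range] at hr
          calc n.choose r ≤ n ^ r := Nat.choose_le_pow n r
            _ ≤ n ^ (σ - 1) := Nat.pow_le_pow_right hn1 (by omega)
      _ = σ * n ^ (σ - 1) := by rw [Finset.sum_const, Finset.card_range, smul_eq_mul]
  have hdesc : (n - k + 1 - σ) ^ σ ≤ σ.factorial * ((n - k).choose σ) := by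
    rw [← Nat.descFactorial_eq_factorial_mul_choose]
    exact Nat.pow_sub_le_descFactorial (n - k) σ
  set m := n - (k + σ - 1) with hm
  have hmeq : n - k + 1 - σ = m := by omega
  have h2m : n ≤ 2 * m := by omega
  have hpow : n ^ (σ - 1) ≤ 2 ^ (σ - 1) * m ^ (σ - 1) := by
    calc n ^ (σ - 1) ≤ (2 * m) ^ (σ - 1) := Nat.pow_le_pow_left h2m _
      _ = 2 ^ (σ - 1) * m ^ (σ - 1) := mul_pow 2 m (σ - 1)
  have hc'm : c' * 2 ^ (σ - 1) ≤ m := by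
    have h1 : 2 ^ (σ - 1) ≤ 2 ^ σ := Nat.pow_le_pow_right (by omega) (by omega)
    have h2 : c' * 2 ^ (σ - 1) ≤ c' * 2 ^ σ := Nat.mul_le_mul_left c' h1
    omega
  have hcore : (c * σ * σ.factorial) * n ^ (σ - 1) ≤ m ^ σ := by
    calc (c * σ * σ.factorial) * n ^ (σ - 1) ≤ c' * (2 ^ (σ - 1) * m ^ (σ - 1)) :=
          Nat.mul_le_mul (by omega) hpow
      _ = (c' * 2 ^ (σ - 1)) * m ^ (σ - 1) := by ring
      _ ≤ m * m ^ (σ - 1) := Nat.mul_le_mul_right _ hc'm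
      _ = m ^ σ := by
          rw [← pow_succ']
          congr 1
          omega
  have hfinal : (c * (∑ r ∈ Finset.range σ, n.choose r)) * σ.factorial ≤
      ((n - k).choose σ) * σ.factorial := by
    calc (c * (∑ r ∈ Finset.range σ, n.choose r)) * σ.factorial
        ≤ (c * (σ * n ^ (σ - 1))) * σ.factorial := by
          apply Nat.mul_le_mul_right
          exact Nat.mul_le_mul_left c hsum
      _ = (c * σ * σ.factorial) * n ^ (σ - 1) := by ring
      _ ≤ m ^ σ := hcore
      _ = (n - k + 1 - σ) ^ σ := by rw [hmeq]
      _ ≤ σ.factorial * ((n - k).choose σ) := hdesc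
      _ = ((n - k).choose σ) * σ.factorial := Nat.mul_comm _ _
  exact Nat.le_of_mul_le_mul_right hfinal σ.factorial_pos

lemma caseA_upper (k : ℕ) (hk : 2 ≤ k) (F : NatHypergraph) (E1 E2 : Finset ℕ)
    (hE1c : E1.card = k) (hE2lt : E2.card < k) (hE2s : (E1 ∩ E2).card < E2.card)
    (hverts : F.verts = E1 ∪ E2) (hsplit : ∀ e ∈ F.edges, e ⊆ E1 ∨ e ⊆ E2)
    (H : NatHypergraph) (hH : IsSimplicialComplex H) (hfree : ¬ H.ContainsCopy F)
    (hbinom : (E2.card.choose (E1 ∩ E2).card * 2 ^ (k + (E2.card - (E1 ∩ E2).card))) *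
        (∑ r ∈ Finset.range (E2.card - (E1 ∩ E2).card), H.verts.card.choose r) ≤
        (H.verts.card - k).choose (E2.card - (E1 ∩ E2).card))
    (hnk : k + (E2.card - (E1 ∩ E2).card) ≤ H.verts.card) :
    H.edges.card ≤ ∑ r ∈ Finset.range k, H.verts.card.choose r := by
  classical
  set t := (E1 ∩ E2).card with htdef
  set σ := E2.card - t with hσdef
  set V := H.verts with hV
  set n := V.card with hn
  have hσ1 : 1 ≤ σ := by omega
  have htσ : t + σ = E2.card := by omega
  set BIG := H.edges.filter (fun e => k ≤ e.card) with hBIGdef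
  set SM := H.edges.filter (fun e => ¬ k ≤ e.card) with hSMdef
  have hsplitcard : BIG.card + SM.card = H.edges.card :=
    Finset.card_filter_add_card_filter_not (s := H.edges) (p := fun e => k ≤ e.card)
  have hSMsub : SM ⊆ V.powerset.filter (fun e => e.card < k) := by
    intro e he
    obtain ⟨he1, he2⟩ := Finset.mem_filter.1 he
    exact Finset.mem_filter.2 ⟨Finset.mem_powerset.2 (H.subset_verts e he1), by omega⟩
  rcases BIG.eq_empty_or_nonempty with hBIGempty | ⟨b₀, hb₀⟩
  · have h1 : H.edges.card = SM.card := by rw [← hsplitcard, hBIGempty]; simp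
    rw [h1]
    calc SM.card ≤ (V.powerset.filter (fun e => e.card < k)).card :=
          Finset.card_le_card hSMsub
      _ = ∑ r ∈ Finset.range k, n.choose r := card_filter_card_lt V k
  -- canonical k-subset and t-subset of each big edge
  have hchoice : ∀ b : Finset ℕ, ∃ p : Finset ℕ × Finset ℕ, b ∈ BIG →
      (p.1 ⊆ b ∧ p.1.card = k ∧ p.2 ⊆ p.1 ∧ p.2.card = t) := by
    intro b
    by_cases hb : b ∈ BIG
    · obtain ⟨e, hesub, hec⟩ := Finset.exists_subset_card_eq ((Finset.mem_filter.1 hb).2)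
      obtain ⟨A, hAsub, hAc⟩ := Finset.exists_subset_card_eq
        (show t ≤ e.card by rw [hec]; omega)
      exact ⟨(e, A), fun _ => ⟨hesub, hec, hAsub, hAc⟩⟩
    · exact ⟨(∅, ∅), fun h => absurd h hb⟩
  choose ch hch using hchoice
  set M := (V.powersetCard E2.card).filter (fun C => C ∉ H.edges) with hMdef
  have hbedge : ∀ b ∈ BIG, b ∈ H.edges := fun b hb => (Finset.mem_filter.1 hb).1
  have heedge : ∀ b ∈ BIG, (ch b).1 ∈ H.edges := fun b hb =>
    hH.2.2 b (hbedge b hb) _ (hch b hb).1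
  have heV : ∀ b ∈ BIG, (ch b).1 ⊆ V := fun b hb => H.subset_verts _ (heedge b hb)
  have hstar' : ∀ b ∈ BIG, ∀ B, B ⊆ V \ (ch b).1 → B.card = σ → ((ch b).2 ∪ B) ∈ M := by
    intro b hb B hBsub hBc
    obtain ⟨hesub, hec, hAsub, hAc⟩ := hch b hb
    have hnotin : (ch b).2 ∪ B ∉ H.edges :=
      star_lemma k F E1 E2 hE1c hverts hsplit H hH hfree _ (heedge b hb) hec _ hAsub hAc
        B hBsub (by omega)
    refine Finset.mem_filter.2 ⟨Finset.mem_powersetCard.2 ⟨?_, ?_⟩, hnotin⟩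
    · apply Finset.union_subset (hAsub.trans (heV b hb))
      exact hBsub.trans Finset.sdiff_subset
    · have hdisj : Disjoint (ch b).2 B := by
        rw [Finset.disjoint_right]
        intro x hx hx2
        exact (Finset.mem_sdiff.1 (hBsub hx)).2 (hAsub hx2)
      rw [Finset.card_union_of_disjoint hdisj, hAc, hBc]
      omega
  set rel : Finset ℕ → Finset ℕ → Prop := fun b C => C ∩ (ch b).1 = (ch b).2 with hreldef
  -- degree lower bound
  have hdeglow : ∀ b ∈ BIG, (n - k).choose σ ≤ (M.bipartiteAbove rel b).card := by
    intro b hb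
    obtain ⟨hesub, hec, hAsub, hAc⟩ := hch b hb
    have hVe : (V \ (ch b).1).card = n - k := by
      rw [Finset.card_sdiff_of_subset (heV b hb), hec]
    have hmapsto : ∀ B ∈ (V \ (ch b).1).powersetCard σ,
        ((ch b).2 ∪ B) ∈ M.bipartiteAbove rel b := by
      intro B hB
      rw [Finset.mem_powersetCard] at hB
      refine (Finset.mem_bipartiteAbove rel).2 ⟨hstar' b hb B hB.1 hB.2, ?_⟩
      show ((ch b).2 ∪ B) ∩ (ch b).1 = (ch b).2
      ext x
      simp only [Finset.mem_inter, Finset.mem_union]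
      constructor
      · rintro ⟨hx1 | hx1, hx2⟩
        · exact hx1
        · exact absurd hx2 (Finset.mem_sdiff.1 (hB.1 hx1)).2
      · intro hx
        exact ⟨Or.inl hx, hAsub hx⟩
    have hinj : Set.InjOn (fun B => (ch b).2 ∪ B) ↑((V \ (ch b).1).powersetCard σ) := by
      intro x hx y hy hxy
      rw [Finset.mem_coe, Finset.mem_powersetCard] at hx hy
      have hxy' : (ch b).2 ∪ x = (ch b).2 ∪ y := hxy
      have hxre : ∀ z : Finset ℕ, z ⊆ V \ (ch b).1 → ((ch b).2 ∪ z) \ (ch b).1 = z := by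
        intro z hz
        ext a
        simp only [Finset.mem_sdiff, Finset.mem_union]
        constructor
        · rintro ⟨hz1 | hz1, hz2⟩
          · exact absurd (hAsub hz1) hz2
          · exact hz1
        · intro ha
          exact ⟨Or.inr ha, (Finset.mem_sdiff.1 (hz ha)).2⟩
      calc x = ((ch b).2 ∪ x) \ (ch b).1 := (hxre x hx.1).symm
        _ = ((ch b).2 ∪ y) \ (ch b).1 := by rw [hxy']
        _ = y := hxre y hy.1
    calc (n - k).choose σ = ((V \ (ch b).1).powersetCard σ).card := by
          rw [Finset.card_powersetCard, hVe]
      _ ≤ (M.bipartiteAbove rel b).card := Finset.card_le_card_of_injOn _ hmapsto hinj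
  -- degree upper bound
  set Scnt := (V.powerset.filter (fun e => e.card < σ)).card with hScnt
  have hdegup : ∀ C ∈ M, (BIG.bipartiteBelow rel C).card ≤
      E2.card.choose t * (2 ^ (k + σ) * Scnt) := by
    intro C hC
    have hCcard : C.card = E2.card := (Finset.mem_powersetCard.1 (Finset.mem_filter.1 hC).1).2
    have hsubB : BIG.bipartiteBelow rel C ⊆
        (C.powersetCard t).biUnion (fun A' => BIG.filter (fun b => (ch b).2 = A')) := by
      intro b hb
      obtain ⟨hbBIG, hrel⟩ := (Finset.mem_bipartiteBelow rel).1 hb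
      obtain ⟨hesub, hec, hAsub, hAc⟩ := hch b hbBIG
      refine Finset.mem_biUnion.2 ⟨(ch b).2, ?_, Finset.mem_filter.2 ⟨hbBIG, rfl⟩⟩
      refine Finset.mem_powersetCard.2 ⟨?_, hAc⟩
      rw [← hrel]
      exact Finset.inter_subset_left
    calc (BIG.bipartiteBelow rel C).card
        ≤ ((C.powersetCard t).biUnion (fun A' => BIG.filter (fun b => (ch b).2 = A'))).card :=
          Finset.card_le_card hsubB
      _ ≤ ∑ A' ∈ C.powersetCard t, (BIG.filter (fun b => (ch b).2 = A')).card :=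
          Finset.card_biUnion_le
      _ ≤ ∑ _A' ∈ C.powersetCard t, 2 ^ (k + σ) * Scnt := by
          apply Finset.sum_le_sum
          intro A' hA'
          apply cluster_bound V k σ
          · intro b hb
            exact H.subset_verts b (hbedge b (Finset.mem_filter.1 hb).1)
          · intro b hb
            exact (Finset.mem_filter.1 (Finset.mem_filter.1 hb).1).2
          · intro b hb b' hb'
            obtain ⟨hbBIG, hbA⟩ := Finset.mem_filter.1 hb
            obtain ⟨hbBIG', hbA'⟩ := Finset.mem_filter.1 hb'
            have hAb := hch b hbBIG
            have hAb' := hch b' hbBIG'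
            have hsub1 : A' ⊆ b := hbA ▸ (hAb.2.2.1.trans hAb.1)
            have hsub1' : A' ⊆ b' := hbA' ▸ (hAb'.2.2.1.trans hAb'.1)
            have hint : t ≤ (b ∩ b').card := by
              have h1 : A' ⊆ b ∩ b' := fun x hx => Finset.mem_inter.2 ⟨hsub1 hx, hsub1' hx⟩
              have h2 : A'.card = t := hbA ▸ hAb.2.2.2
              exact h2 ▸ Finset.card_le_card h1
            have := diamond_lemma k F E1 E2 hE1c hverts hsplit hE2lt hE2s H hH hfree
              b b' (hbedge b hbBIG) (hbedge b' hbBIG')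
              (Finset.mem_filter.1 hbBIG).2 (Finset.mem_filter.1 hbBIG').2 hint
            omega
      _ = E2.card.choose t * (2 ^ (k + σ) * Scnt) := by
          rw [Finset.sum_const, Finset.card_powersetCard, hCcard, smul_eq_mul]
  -- double counting
  have hkey : BIG.card * ((n - k).choose σ) ≤
      M.card * (E2.card.choose t * (2 ^ (k + σ) * Scnt)) :=
    Finset.card_mul_le_card_mul rel hdeglow hdegup
  have hD : E2.card.choose t * (2 ^ (k + σ) * Scnt) ≤ (n - k).choose σ := by
    have h1 : Scnt = ∑ r ∈ Finset.range σ, n.choose r := card_filter_card_lt V σ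
    rw [h1, ← Nat.mul_assoc]
    exact hbinom
  have hpos : 0 < (n - k).choose σ := Nat.choose_pos (by omega)
  have hBIGM : BIG.card ≤ M.card := by
    have h2 : BIG.card * ((n - k).choose σ) ≤ M.card * ((n - k).choose σ) :=
      hkey.trans (Nat.mul_le_mul_left M.card hD)
    exact Nat.le_of_mul_le_mul_right h2 hpos
  -- assemble
  have hdisjSM : Disjoint SM M := by
    rw [Finset.disjoint_left]
    intro e he heM
    exact (Finset.mem_filter.1 heM).2 (Finset.mem_filter.1 he).1
  have hunion : SM ∪ M ⊆ V.powerset.filter (fun e => e.card < k) := by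
    apply Finset.union_subset hSMsub
    intro C hC
    have h1 := Finset.mem_powersetCard.1 (Finset.mem_filter.1 hC).1
    exact Finset.mem_filter.2 ⟨Finset.mem_powerset.2 h1.1, by omega⟩
  have hSMM : SM.card + M.card ≤ ∑ r ∈ Finset.range k, n.choose r := by
    calc SM.card + M.card = (SM ∪ M).card := (Finset.card_union_of_disjoint hdisjSM).symm
      _ ≤ (V.powerset.filter (fun e => e.card < k)).card := Finset.card_le_card hunion
      _ = ∑ r ∈ Finset.range k, n.choose r := card_filter_card_lt V k
  omega

lemma caseA (k : ℕ) (hk : 2 ≤ k) (F : NatHypergraph) (E1 E2 : Finset ℕ)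
    (hE1e : E1 ∈ F.edges) (hE1c : E1.card = k) (hE2lt : E2.card < k)
    (hverts : F.verts = E1 ∪ E2) (hsplit : ∀ e ∈ F.edges, e ⊆ E1 ∨ e ⊆ E2)
    (hnsub : ¬ E2 ⊆ E1) :
    ∀ᶠ n in Filter.atTop,
      exSC n F = exClPlus k n {F.layer k} + ∑ r ∈ Finset.range k, n.choose r := by
  have hE2s : (E1 ∩ E2).card < E2.card := by
    apply Finset.card_lt_card
    refine ⟨Finset.inter_subset_right, fun h => hnsub ?_⟩
    intro x hx
    exact (Finset.mem_inter.1 (h hx)).1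
  have hE1layer : E1 ∈ (F.layer k).edges := Finset.mem_filter.2 ⟨hE1e, hE1c⟩
  obtain ⟨N₁, hN₁⟩ := binom_aux k (E2.card - (E1 ∩ E2).card)
    (E2.card.choose (E1 ∩ E2).card * 2 ^ (k + (E2.card - (E1 ∩ E2).card))) (by omega)
  rw [Filter.eventually_atTop]
  refine ⟨max N₁ (k + E2.card), fun n hn => ?_⟩
  have hnN₁ : N₁ ≤ n := le_trans (le_max_left _ _) hn
  have hnkE : k + E2.card ≤ n := le_trans (le_max_right _ _) hn
  -- the zero value of exClPlus
  have hzero : exClPlus k n {F.layer k} = 0 := by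
    have hG₀ : (0 : ℕ) ∈ {m | ∃ G : NatHypergraph, G.IsUniform k ∧ G.verts.card = n ∧
        (∀ H' ∈ ({F.layer k} : Set NatHypergraph), ¬ G.ContainsCopy H') ∧
        G.cliquePlusCount k = m} := by
      refine ⟨NatHypergraph.mk (Finset.range n) ∅ (by simp), ?_, by simp, ?_, ?_⟩
      · intro e he; simp at he
      · rintro H' hH' ⟨f, hinj, hmapv, hmape⟩
        rw [Set.mem_singleton_iff] at hH'; subst hH'
        simpa using hmape E1 hE1layer
      · have hempty : {T : Finset ℕ | NatHypergraph.IsCliqueIn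
            (NatHypergraph.mk (Finset.range n) ∅ (by simp)) k T ∧ k ≤ T.card} = ∅ := by
          ext T
          simp only [Set.mem_setOf_eq, Set.mem_empty_iff_false, iff_false, not_and]
          rintro ⟨hTv, h1 | h2 | h3⟩
          · omega
          · obtain ⟨e, he, _⟩ := h2
            simp at he
          · intro hTc
            obtain ⟨S, hS⟩ := Finset.powersetCard_nonempty.2 hTc
            simpa using h3 S hS
        rw [NatHypergraph.cliquePlusCount, hempty, Set.ncard_empty]
    apply le_antisymm _ (Nat.zero_le _)
    apply csSup_le ⟨0, hG₀⟩
    rintro m ⟨G, hGuni, hGcard, hGfree, rfl⟩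
    by_cases hGE : G.edges = ∅
    · have hempty : {T : Finset ℕ | G.IsCliqueIn k T ∧ k ≤ T.card} = ∅ := by
        ext T
        simp only [Set.mem_setOf_eq, Set.mem_empty_iff_false, iff_false, not_and]
        rintro ⟨hTv, h1 | h2 | h3⟩
        · omega
        · obtain ⟨e, he, _⟩ := h2
          rw [hGE] at he
          exact absurd he (Finset.notMem_empty e)
        · intro hTc
          obtain ⟨S, hS⟩ := Finset.powersetCard_nonempty.2 hTc
          have := h3 S hS
          rw [hGE] at this
          exact absurd this (Finset.notMem_empty S)
      rw [NatHypergraph.cliquePlusCount, hempty, Set.ncard_empty]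
    · exfalso
      obtain ⟨g, hg⟩ := Finset.nonempty_iff_ne_empty.2 hGE
      have hgc : g.card = k := hGuni g hg
      have hgV : g ⊆ G.verts := G.subset_verts g hg
      have hE21c : (E2 \ E1).card ≤ (G.verts \ g).card := by
        have h1 : (E2 \ E1).card ≤ E2.card := Finset.card_le_card Finset.sdiff_subset
        have h2 : (G.verts \ g).card = n - k := by rw [Finset.card_sdiff_of_subset hgV, hgc, hGcard]
        omega
      obtain ⟨B₀, hB₀sub, hB₀c⟩ := Finset.exists_subset_card_eq hE21c
      obtain ⟨f, hinj, hm1, hm2, _⟩ := exists_glue3 E1 (E2 \ E1) ∅ g B₀ ∅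
        (by rw [Finset.disjoint_right]; exact fun x hx hx2 => (Finset.mem_sdiff.1 hx).2 hx2)
        (Finset.disjoint_empty_right _) (Finset.disjoint_empty_right _)
        (by rw [Finset.disjoint_right]
            exact fun x hx hx2 => (Finset.mem_sdiff.1 (hB₀sub hx)).2 hx2)
        (Finset.disjoint_empty_right _) (Finset.disjoint_empty_right _)
        (by rw [hE1c, hgc]) hB₀c.symm (by simp)
      have hsetseq : E1 ∪ E2 \ E1 ∪ ∅ = E1 ∪ E2 := by
        ext x
        simp only [Finset.mem_union, Finset.mem_sdiff, Finset.notMem_empty, or_false]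
        tauto
      apply hGfree (F.layer k) (Set.mem_singleton _)
      refine ⟨f, ?_, ?_, ?_⟩
      · show Set.InjOn f ↑F.verts
        rw [hverts, ← hsetseq]
        exact hinj
      · intro v hv
        show f v ∈ G.verts
        have hv' : v ∈ E1 ∪ E2 := by rw [← hverts]; exact hv
        rcases Finset.mem_union.1 hv' with h | h
        · by_cases h2 : v ∈ E1
          · exact hgV (hm1 ▸ Finset.mem_image_of_mem f h2)
          · exact absurd h h2
        · by_cases h2 : v ∈ E1
          · exact hgV (hm1 ▸ Finset.mem_image_of_mem f h2)
          · have : f v ∈ B₀ := hm2 ▸ Finset.mem_image_of_mem f (Finset.mem_sdiff.2 ⟨h, h2⟩)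
            exact (Finset.mem_sdiff.1 (hB₀sub this)).1
      · intro d hd
        obtain ⟨hde, hdc⟩ := Finset.mem_filter.1 hd
        rcases hsplit d hde with hsub | hsub
        · have : d = E1 := Finset.eq_of_subset_of_card_le hsub (by omega)
          subst this
          rw [hm1]
          exact hg
        · exfalso
          have := Finset.card_le_card hsub
          omega
  -- the skeleton complex gives the lower bound
  have hskel : (∑ r ∈ Finset.range k, n.choose r) ∈
      {m | ∃ H : NatHypergraph, IsSimplicialComplex H ∧ H.verts.card = n ∧
        ¬ H.ContainsCopy F ∧ H.edges.card = m} := by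
    refine ⟨NatHypergraph.mk (Finset.range n)
      ((Finset.range n).powerset.filter (fun e => e.card < k))
      (fun e he => Finset.mem_powerset.1 (Finset.mem_filter.1 he).1), ⟨?_, ?_, ?_⟩,
      by simp, ?_, ?_⟩
    · exact Finset.mem_filter.2 ⟨Finset.mem_powerset.2 (Finset.empty_subset _), by simp; omega⟩
    · intro v hv
      exact Finset.mem_filter.2 ⟨Finset.mem_powerset.2 (Finset.singleton_subset_iff.2 hv),
        by simp; omega⟩
    · intro e he e' he'
      obtain ⟨h1, h2⟩ := Finset.mem_filter.1 he
      refine Finset.mem_filter.2 ⟨Finset.mem_powerset.2 (he'.trans (Finset.mem_powerset.1 h1)),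
        ?_⟩
      have := Finset.card_le_card he'
      omega
    · rintro ⟨f, hinj, hmapv, hmape⟩
      have himg := hmape E1 hE1e
      have hcardim : (E1.image f).card = k := by
        rw [Finset.card_image_of_injOn (hinj.mono ?_), hE1c]
        rw [hverts]
        exact Finset.coe_subset.2 Finset.subset_union_left
      have := (Finset.mem_filter.1 himg).2
      omega
    · show ((Finset.range n).powerset.filter (fun e => e.card < k)).card = _
      rw [card_filter_card_lt, Finset.card_range]
  -- upper bound
  have hupper : ∀ m ∈ {m | ∃ H : NatHypergraph, IsSimplicialComplex H ∧ H.verts.card = n ∧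
      ¬ H.ContainsCopy F ∧ H.edges.card = m}, m ≤ ∑ r ∈ Finset.range k, n.choose r := by
    rintro m ⟨H, hH, hHcard, hfree, rfl⟩
    have hb : (E2.card.choose (E1 ∩ E2).card * 2 ^ (k + (E2.card - (E1 ∩ E2).card))) *
        (∑ r ∈ Finset.range (E2.card - (E1 ∩ E2).card), H.verts.card.choose r) ≤
        (H.verts.card - k).choose (E2.card - (E1 ∩ E2).card) := by
      rw [hHcard]
      exact hN₁ n hnN₁
    have hnk : k + (E2.card - (E1 ∩ E2).card) ≤ H.verts.card := by
      rw [hHcard]; omega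
    have := caseA_upper k hk F E1 E2 hE1c hE2lt hE2s hverts hsplit H hH hfree hb hnk
    rw [hHcard] at this
    exact this
  rw [hzero]
  simp only [Nat.zero_add]
  exact le_antisymm (csSup_le ⟨_, hskel⟩ hupper) (le_csSup (exSC_bddAbove n F) hskel)

end TrivialAux

theorem trivial_of_at_most_two_maximalEdges (k : ℕ) (hk : 2 ≤ k) (F : NatHypergraph)
    (hF : IsSimplicialComplex F) (hdim : F.IsDimensional (k - 1))
    (hcard : F.maximalEdges.card ≤ 2) :
    IsTrivialSC k F := by
  obtain ⟨E1, E2, hE1e, hE2e, hE1c, hE2c, hverts, hsplit, hdown1, hdown2, hnsub⟩ :=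
    TrivialAux.structureF k hk F hF hdim hcard
  rcases hE2c.lt_or_eq with hE2lt | hE2k
  · exact TrivialAux.caseA k hk F E1 E2 hE1e hE1c hE2lt hverts hsplit (hnsub hE2lt)
  · exact Filter.Eventually.of_forall
      (TrivialAux.caseB k hk F E1 E2 hE1e hE2e hE1c hE2k hverts hsplit)
end

section
/- Let k ≥ 3 be an integer and let Q be an edge-degenerate k-uniform hypergraph on ℓ vertices. Then every non-empty ℓ-full k-uniform hypergraph contains a copy of Q. -/
open Filter Asymptotics

open Finset

lemma foldr_union_mem (ls : List (Finset ℕ)) (x : ℕ) :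
    x ∈ ls.foldr (· ∪ ·) ∅ ↔ ∃ e ∈ ls, x ∈ e := by
  induction ls with
  | nil => simp
  | cons a t ih => simp [ih]

lemma hg_step {G : NatHypergraph} {k l : ℕ} (hk : 1 ≤ k) (hGu : G.IsUniform k)
    (hGfull : G.IsFull l k) {A E U : Finset ℕ} (hAE : A ⊆ E) (hE : E ∈ G.edges)
    (hA : A.card < k) (hU : (U \ A).card < l) :
    ∃ E' ∈ G.edges, ∃ v ∈ E', v ∉ U ∧ v ∉ A ∧ A ⊆ E' := by
  classical
  have hEk : E.card = k := hGu E hE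
  obtain ⟨B, hAB, hBE, hBcard⟩ :=
    Finset.exists_subsuperset_card_eq hAE (n := k - 1) (by omega) (by omega)
  have hBv : B ⊆ G.verts := hBE.trans (G.subset_verts E hE)
  set Φ := G.edges.filter (fun e => B ⊆ e) with hΦ
  have hEΦ : E ∈ Φ := Finset.mem_filter.mpr ⟨hE, hBE⟩
  have hlΦ : l ≤ Φ.card := by
    rcases hGfull B hBv hBcard with h | h
    · exact absurd h (Finset.ne_empty_of_mem hEΦ)
    · exact h
  by_contra hcon
  push_neg at hcon
  have key : ∀ e ∈ Φ, e \ B ⊆ U \ A := by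
    intro e he v hv
    have heE : e ∈ G.edges := (Finset.mem_filter.mp he).1
    have hBe : B ⊆ e := (Finset.mem_filter.mp he).2
    have hvB : v ∉ B := (Finset.mem_sdiff.mp hv).2
    have hve : v ∈ e := (Finset.mem_sdiff.mp hv).1
    have hvA : v ∉ A := fun h => hvB (hAB h)
    have hvU : v ∈ U := by
      by_contra hvU
      exact absurd (hAB.trans hBe) (hcon e heE v hve hvU hvA)
    exact Finset.mem_sdiff.mpr ⟨hvU, hvA⟩
  have hcardsd : ∀ e ∈ Φ, (e \ B).card = 1 := by
    intro e he
    have heE : e ∈ G.edges := (Finset.mem_filter.mp he).1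
    have hBe : B ⊆ e := (Finset.mem_filter.mp he).2
    rw [Finset.card_sdiff_of_subset hBe, hGu e heE, hBcard]; omega
  have hinj : Set.InjOn (· \ B) ↑Φ := by
    intro e₁ h₁ e₂ h₂ h
    have hB1 : B ⊆ e₁ := (Finset.mem_filter.mp h₁).2
    have hB2 : B ⊆ e₂ := (Finset.mem_filter.mp h₂).2
    rw [← Finset.union_sdiff_of_subset hB1, ← Finset.union_sdiff_of_subset hB2,
        show e₁ \ B = e₂ \ B from h]
  have hΦle : Φ.card ≤ ((U \ A).powersetCard 1).card := by
    apply Finset.card_le_card_of_injOn (· \ B)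
    · intro e he
      exact Finset.mem_powersetCard.mpr ⟨key e he, hcardsd e he⟩
    · exact hinj
  rw [Finset.card_powersetCard, Nat.choose_one_right] at hΦle
  omega

lemma hg_verts {G : NatHypergraph} {k l : ℕ} (hk : 1 ≤ k) (hGu : G.IsUniform k)
    (hGfull : G.IsFull l k) (hGne : G.edges.Nonempty) : l ≤ G.verts.card := by
  classical
  obtain ⟨E, hE⟩ := hGne
  have hEk : E.card = k := hGu E hE
  obtain ⟨B, hBE, hBcard⟩ := Finset.exists_subset_card_eq (s := E) (n := k - 1) (by omega)
  have hBv : B ⊆ G.verts := hBE.trans (G.subset_verts E hE)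
  set Φ := G.edges.filter (fun e => B ⊆ e) with hΦ
  have hEΦ : E ∈ Φ := Finset.mem_filter.mpr ⟨hE, hBE⟩
  have hlΦ : l ≤ Φ.card := by
    rcases hGfull B hBv hBcard with h | h
    · exact absurd h (Finset.ne_empty_of_mem hEΦ)
    · exact h
  have hΦle : Φ.card ≤ ((G.verts \ B).powersetCard 1).card := by
    apply Finset.card_le_card_of_injOn (· \ B)
    · intro e he
      have heE : e ∈ G.edges := (Finset.mem_filter.mp he).1
      have hBe : B ⊆ e := (Finset.mem_filter.mp he).2
      refine Finset.mem_powersetCard.mpr ⟨Finset.sdiff_subset_sdiff (G.subset_verts e heE) le_rfl, ?_⟩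
      rw [Finset.card_sdiff_of_subset hBe, hGu e heE, hBcard]; omega
    · intro e₁ h₁ e₂ h₂ h
      have hB1 : B ⊆ e₁ := (Finset.mem_filter.mp h₁).2
      have hB2 : B ⊆ e₂ := (Finset.mem_filter.mp h₂).2
      rw [← Finset.union_sdiff_of_subset hB1, ← Finset.union_sdiff_of_subset hB2,
        show e₁ \ B = e₂ \ B from h]
  rw [Finset.card_powersetCard, Nat.choose_one_right] at hΦle
  have : (G.verts \ B).card ≤ G.verts.card := Finset.card_le_card (Finset.sdiff_subset)
  omega

lemma hg_extend {G : NatHypergraph} {k l : ℕ} (hk : 1 ≤ k) (hGu : G.IsUniform k)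
    (hGfull : G.IsFull l k) :
    ∀ (m : ℕ) (A E U : Finset ℕ), A ⊆ E → E ∈ G.edges → (U \ A).card < l →
      k - A.card ≤ m → ∃ F ∈ G.edges, A ⊆ F ∧ F ∩ U ⊆ A := by
  intro m
  induction m with
  | zero =>
    intro A E U hAE hE _ hm
    have : A = E := Finset.eq_of_subset_of_card_le hAE (by rw [hGu E hE]; omega)
    subst this
    exact ⟨A, hE, Finset.Subset.refl A, Finset.inter_subset_left⟩
  | succ n ih =>
    intro A E U hAE hE hU hm
    by_cases hA : A.card < k
    · obtain ⟨E', hE', v, hvE', hvU, hvA, hAE'⟩ := hg_step hk hGu hGfull hAE hE hA hU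
      have hU' : (U \ insert v A).card < l :=
        lt_of_le_of_lt (Finset.card_le_card
          (Finset.sdiff_subset_sdiff le_rfl (Finset.subset_insert v A))) hU
      have hins : insert v A ⊆ E' := Finset.insert_subset hvE' hAE'
      have hcard : k - (insert v A).card ≤ n := by
        rw [Finset.card_insert_of_notMem hvA]; omega
      obtain ⟨F, hF, hAF, hFU⟩ := ih (insert v A) E' U hins hE' hU' hcard
      refine ⟨F, hF, (Finset.subset_insert v A).trans hAF, fun x hx => ?_⟩
      have hxU : x ∈ U := (Finset.mem_inter.mp hx).2
      rcases Finset.mem_insert.mp (hFU hx) with rfl | h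
      · exact absurd hxU hvU
      · exact h
    · have : A = E := Finset.eq_of_subset_of_card_le hAE (by rw [hGu E hE]; omega)
      subst this
      exact ⟨A, hE, Finset.Subset.refl A, Finset.inter_subset_left⟩


theorem full_contains_edge_degenerate (k l : ℕ) (hk : 3 ≤ k) (Q : NatHypergraph)
    (hQu : Q.IsUniform k) (hQv : Q.verts.card = l) (hQd : Q.EdgeDegenerate)
    (G : NatHypergraph) (hGu : G.IsUniform k) (hGfull : G.IsFull l k)
    (hGne : G.edges.Nonempty) :
    G.ContainsCopy Q := by
  classical
  obtain ⟨L, hnd, htf, hdeg⟩ := hQd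
  have hk1 : 1 ≤ k := by omega
  have hLQ : ∀ e ∈ L, e ∈ Q.edges := fun e he => htf ▸ List.mem_toFinset.mpr he
  have main : ∀ i ≤ L.length, ∃ f : ℕ → ℕ,
      Set.InjOn f ↑((L.take i).foldr (· ∪ ·) ∅) ∧
      ∀ e ∈ L.take i, e.image f ∈ G.edges := by
    intro i
    induction i with
    | zero => exact fun _ => ⟨id, by simp, by simp⟩
    | succ i ih =>
      intro hi1
      have hi : i < L.length := hi1
      obtain ⟨f, hfinj, hfedge⟩ := ih (le_of_lt hi)
      set W := (L.take i).foldr (· ∪ ·) ∅ with hW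
      set e := L.get ⟨i, hi⟩ with he
      have htake : L.take (i + 1) = L.take i ++ [e] := by
        rw [List.take_succ, List.getElem?_eq_getElem hi]
        rfl
      have hWsucc : (L.take (i + 1)).foldr (· ∪ ·) ∅ = W ∪ e := by
        ext x
        rw [foldr_union_mem, htake, Finset.mem_union, hW, foldr_union_mem]
        simp only [List.mem_append, List.mem_singleton]
        constructor
        · rintro ⟨e', h1 | rfl, h2⟩
          · exact Or.inl ⟨e', h1, h2⟩
          · exact Or.inr h2
        · rintro (⟨e', h1, h2⟩ | hx)
          · exact ⟨e', Or.inl h1, h2⟩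
          · exact ⟨e, Or.inr rfl, hx⟩
      set S := e ∩ W with hS
      set A := S.image f with hA
      set U := W.image f with hU
      have hSW : S ⊆ W := Finset.inter_subset_right
      have hSe : S ⊆ e := Finset.inter_subset_left
      -- find an edge of G containing A
      have hAex : ∃ E ∈ G.edges, A ⊆ E := by
        rcases Nat.eq_zero_or_pos i with h0 | h0
        · obtain ⟨E, hE⟩ := hGne
          refine ⟨E, hE, ?_⟩
          have : S = ∅ := by
            subst h0
            simp [hS, hW]
          simp [hA, this]
        · obtain ⟨j, hj, hsub⟩ := hdeg ⟨i, hi⟩ h0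
          have hj' : (j : ℕ) < i := hj
          have hjW : L.get j ∈ L.take i := by
            have hlen : (j : ℕ) < (L.take i).length := by
              rw [List.length_take]; omega
            have : (L.take i)[(j : ℕ)]'hlen = L.get j := by
              simp [List.getElem_take]
            rw [← this]
            exact List.getElem_mem _
          refine ⟨(L.get j).image f, hfedge _ hjW, ?_⟩
          exact Finset.image_subset_image hsub
      obtain ⟨E, hEmem, hAEsub⟩ := hAex
      -- cardinality facts
      have heQ : e ∈ Q.edges := hLQ e (List.get_mem L ⟨i, hi⟩)
      have heW : ∀ e' ∈ L.take i, e' ⊆ W := by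
        intro e' h1 x h2
        exact (foldr_union_mem _ x).mpr ⟨e', h1, h2⟩
      have hWQ : W ⊆ Q.verts := by
        intro x hx
        obtain ⟨e', h1, h2⟩ := (foldr_union_mem _ x).mp hx
        exact Q.subset_verts e' (hLQ e' (List.mem_of_mem_take h1)) h2
      have hdisj : Disjoint (W \ S) e := by
        rw [Finset.disjoint_left]
        intro x hx hxe
        exact (Finset.mem_sdiff.mp hx).2 (Finset.mem_inter.mpr ⟨hxe, (Finset.mem_sdiff.mp hx).1⟩)
      have hcard2 : (W \ S).card + k ≤ l := by
        have h1 : (W \ S) ∪ e ⊆ Q.verts :=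
          Finset.union_subset ((Finset.sdiff_subset).trans hWQ) (Q.subset_verts e heQ)
        have h2 := Finset.card_le_card h1
        rw [Finset.card_union_of_disjoint hdisj, hQu e heQ] at h2
        omega
      have hUA : U \ A ⊆ (W \ S).image f := by
        intro x hx
        obtain ⟨hxU, hxA⟩ := Finset.mem_sdiff.mp hx
        obtain ⟨w, hw, rfl⟩ := Finset.mem_image.mp hxU
        refine Finset.mem_image.mpr ⟨w, Finset.mem_sdiff.mpr ⟨hw, fun hwS => hxA ?_⟩, rfl⟩
        exact Finset.mem_image_of_mem f hwS
      have hUcard : (U \ A).card < l := by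
        have := (Finset.card_le_card hUA).trans (Finset.card_image_le)
        omega
      obtain ⟨F, hFmem, hAF, hFU⟩ :=
        hg_extend hk1 hGu hGfull k A E U hAEsub hEmem hUcard (Nat.sub_le k A.card)
      have hAcard : A.card = S.card :=
        Finset.card_image_of_injOn (hfinj.mono (by exact_mod_cast hSW))
      have hdiffcard : (e \ S).card = (F \ A).card := by
        rw [Finset.card_sdiff_of_subset hSe, Finset.card_sdiff_of_subset hAF, hQu e heQ, hGu F hFmem, hAcard]
      have hcardeq : Fintype.card ↥(e \ S) = Fintype.card ↥(F \ A) := by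
        simpa using hdiffcard
      set g := Fintype.equivOfCardEq hcardeq with hg
      set f' : ℕ → ℕ := fun x => if hx : x ∈ e \ S then (g ⟨x, hx⟩ : ℕ) else f x with hf'
      have hf'W : ∀ x ∈ W, f' x = f x := by
        intro x hx
        have : x ∉ e \ S := fun h =>
          (Finset.mem_sdiff.mp h).2 (Finset.mem_inter.mpr ⟨(Finset.mem_sdiff.mp h).1, hx⟩)
        simp only [hf']
        exact dif_neg this
      have hgmem : ∀ (x : ℕ) (hx : x ∈ e \ S), (g ⟨x, hx⟩ : ℕ) ∈ F \ A :=
        fun x hx => (g ⟨x, hx⟩).2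
      have hFAU : ∀ y ∈ F \ A, y ∉ U := by
        intro y hy hyU
        exact (Finset.mem_sdiff.mp hy).2
          (hFU (Finset.mem_inter.mpr ⟨(Finset.mem_sdiff.mp hy).1, hyU⟩))
      -- injectivity
      have hinj' : Set.InjOn f' ↑(W ∪ e) := by
        intro x hx y hy hxy
        rw [Finset.mem_coe, Finset.mem_union] at hx hy
        have hcases : ∀ z : ℕ, (z ∈ W ∨ z ∈ e) → z ∈ W ∨ z ∈ e \ S := by
          intro z hz
          by_cases hzS : z ∈ e \ S
          · exact Or.inr hzS
          · rcases hz with h | h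
            · exact Or.inl h
            · left
              by_contra hzW
              exact hzS (Finset.mem_sdiff.mpr ⟨h, fun hS' => hzW (hSW hS')⟩)
        rcases hcases x hx with hxW | hxe <;> rcases hcases y hy with hyW | hye
        · exact hfinj (by exact_mod_cast hxW) (by exact_mod_cast hyW)
            (by rwa [hf'W x hxW, hf'W y hyW] at hxy)
        · exfalso
          rw [hf'W x hxW] at hxy
          have h1 : f' y ∈ F \ A := by
            simp only [hf']; rw [dif_pos hye]; exact hgmem y hye
          exact hFAU _ h1 (hxy ▸ Finset.mem_image_of_mem f hxW)
        · exfalso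
          rw [hf'W y hyW] at hxy
          have h1 : f' x ∈ F \ A := by
            simp only [hf']; rw [dif_pos hxe]; exact hgmem x hxe
          exact hFAU _ h1 (hxy ▸ Finset.mem_image_of_mem f hyW)
        · have h1 : f' x = (g ⟨x, hxe⟩ : ℕ) := by simp only [hf']; exact dif_pos hxe
          have h2 : f' y = (g ⟨y, hye⟩ : ℕ) := by simp only [hf']; exact dif_pos hye
          have : g ⟨x, hxe⟩ = g ⟨y, hye⟩ := Subtype.ext (by rw [← h1, ← h2, hxy])
          exact congrArg Subtype.val (g.injective this)
      -- the new edge maps to F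
      have himgF : e.image f' = F := by
        apply Finset.Subset.antisymm
        · intro y hy
          obtain ⟨x, hx, rfl⟩ := Finset.mem_image.mp hy
          by_cases hxS : x ∈ e \ S
          · have : f' x ∈ F \ A := by
              simp only [hf']; rw [dif_pos hxS]; exact hgmem x hxS
            exact (Finset.mem_sdiff.mp this).1
          · have hxS' : x ∈ S := by
              by_contra h
              exact hxS (Finset.mem_sdiff.mpr ⟨hx, h⟩)
            rw [hf'W x (hSW hxS')]
            exact hAF (Finset.mem_image_of_mem f hxS')
        · intro y hy
          by_cases hyA : y ∈ A
          · obtain ⟨x, hx, rfl⟩ := Finset.mem_image.mp hyA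
            have := hf'W x (hSW hx)
            exact Finset.mem_image.mpr ⟨x, hSe hx, this⟩
          · have hyFA : y ∈ F \ A := Finset.mem_sdiff.mpr ⟨hy, hyA⟩
            set z := g.symm ⟨y, hyFA⟩ with hz
            refine Finset.mem_image.mpr ⟨(z : ℕ), (Finset.mem_sdiff.mp z.2).1, ?_⟩
            have hzmem : (z : ℕ) ∈ e \ S := z.2
            have : f' (z : ℕ) = (g ⟨(z : ℕ), hzmem⟩ : ℕ) := by
              simp only [hf']; exact dif_pos hzmem
            rw [this]
            have : (⟨(z : ℕ), hzmem⟩ : ↥(e \ S)) = z := Subtype.ext rfl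
            rw [this, hz, Equiv.apply_symm_apply]
      refine ⟨f', by rwa [hWsucc], ?_⟩
      intro e' he'
      rw [htake, List.mem_append, List.mem_singleton] at he'
      rcases he' with h1 | rfl
      · have : e'.image f' = e'.image f := by
          apply Finset.image_congr
          intro x hx
          exact hf'W x (heW e' h1 hx)
        rw [this]
        exact hfedge e' h1
      · rw [himgF]
        exact hFmem
  -- assemble final embedding
  obtain ⟨f, hfinj, hfedge⟩ := main L.length le_rfl
  rw [List.take_length] at hfinj hfedge
  set W := L.foldr (· ∪ ·) ∅ with hW
  have hWQ : W ⊆ Q.verts := by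
    intro x hx
    obtain ⟨e', h1, h2⟩ := (foldr_union_mem _ x).mp hx
    exact Q.subset_verts e' (hLQ e' h1) h2
  have hedges : ∀ e ∈ Q.edges, e.image f ∈ G.edges := by
    intro e he
    exact hfedge e (List.mem_toFinset.mp (htf ▸ he : e ∈ L.toFinset))
  have hWe : ∀ e ∈ Q.edges, e ⊆ W := by
    intro e he x hx
    exact (foldr_union_mem _ x).mpr ⟨e, List.mem_toFinset.mp (htf ▸ he : e ∈ L.toFinset), hx⟩
  set U := W.image f with hU
  have hUv : U ⊆ G.verts := by
    intro y hy
    obtain ⟨x, hx, rfl⟩ := Finset.mem_image.mp hy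
    obtain ⟨e', h1, h2⟩ := (foldr_union_mem _ x).mp hx
    exact G.subset_verts _ (hfedge e' h1) (Finset.mem_image_of_mem f h2)
  set R := Q.verts \ W with hR
  have hlG : l ≤ G.verts.card := hg_verts hk1 hGu hGfull hGne
  have hcardR : R.card ≤ (G.verts \ U).card := by
    have h1 : R.card = l - W.card := by rw [hR, Finset.card_sdiff_of_subset hWQ, hQv]
    have h2 : U.card ≤ W.card := Finset.card_image_le
    have h3 := Finset.le_card_sdiff U G.verts
    have h4 : W.card ≤ l := hQv ▸ Finset.card_le_card hWQ
    omega
  obtain ⟨t', ht'sub, ht'card⟩ := Finset.exists_subset_card_eq hcardR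
  have hcardeq : Fintype.card ↥R = Fintype.card ↥t' := by simp [ht'card]
  set g := Fintype.equivOfCardEq hcardeq with hg
  set h : ℕ → ℕ := fun x => if hx : x ∈ R then (g ⟨x, hx⟩ : ℕ) else f x with hh
  have hhW : ∀ x ∈ W, h x = f x := by
    intro x hx
    have : x ∉ R := fun hxR => (Finset.mem_sdiff.mp hxR).2 hx
    simp only [hh]
    exact dif_neg this
  have hgmem : ∀ (x : ℕ) (hx : x ∈ R), (g ⟨x, hx⟩ : ℕ) ∈ G.verts \ U :=
    fun x hx => ht'sub (g ⟨x, hx⟩).2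
  refine ⟨h, ?_, ?_, ?_⟩
  · intro x hx y hy hxy
    rw [Finset.mem_coe] at hx hy
    have hcases : ∀ z : ℕ, z ∈ Q.verts → z ∈ W ∨ z ∈ R := by
      intro z hz
      by_cases hzR : z ∈ R
      · exact Or.inr hzR
      · left
        by_contra hzW
        exact hzR (Finset.mem_sdiff.mpr ⟨hz, hzW⟩)
    rcases hcases x hx with hxW | hxR <;> rcases hcases y hy with hyW | hyR
    · exact hfinj (by exact_mod_cast hxW) (by exact_mod_cast hyW)
        (by rwa [hhW x hxW, hhW y hyW] at hxy)
    · exfalso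
      rw [hhW x hxW] at hxy
      have h1 : h y ∈ G.verts \ U := by
        simp only [hh]; rw [dif_pos hyR]; exact hgmem y hyR
      exact (Finset.mem_sdiff.mp h1).2 (hxy ▸ Finset.mem_image_of_mem f hxW)
    · exfalso
      rw [hhW y hyW] at hxy
      have h1 : h x ∈ G.verts \ U := by
        simp only [hh]; rw [dif_pos hxR]; exact hgmem x hxR
      exact (Finset.mem_sdiff.mp h1).2 (hxy ▸ Finset.mem_image_of_mem f hyW)
    · have h1 : h x = (g ⟨x, hxR⟩ : ℕ) := by simp only [hh]; exact dif_pos hxR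
      have h2 : h y = (g ⟨y, hyR⟩ : ℕ) := by simp only [hh]; exact dif_pos hyR
      have : g ⟨x, hxR⟩ = g ⟨y, hyR⟩ := Subtype.ext (by rw [← h1, ← h2, hxy])
      exact congrArg Subtype.val (g.injective this)
  · intro v hv
    by_cases hvR : v ∈ R
    · have : h v ∈ G.verts \ U := by
        simp only [hh]; rw [dif_pos hvR]; exact hgmem v hvR
      exact (Finset.mem_sdiff.mp this).1
    · have hvW : v ∈ W := by
        by_contra hvW
        exact hvR (Finset.mem_sdiff.mpr ⟨hv, hvW⟩)
      rw [hhW v hvW]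
      exact hUv (Finset.mem_image_of_mem f hvW)
  · intro e he
    have : e.image h = e.image f := by
      apply Finset.image_congr
      intro x hx
      exact hhW x (hWe e he hx)
    rw [this]
    exact hedges e he
end

section
/- Let M³₂+P₄ and M³₂+P₅ be the 2-dimensional simplicial complexes on vertex set {1,2,3,4,5,6} whose maximal edges are respectively {1,2,3},{4,5,6},{1,4},{2,4},{2,5},{3,5}; and {1,2,3},{4,5,6},{1,4},{2,4},{2,5},{3,5},{3,6}. Then ex(n, M³₂+P₄) = O(n³) and ex(n, M³₂+P₅) = O(n³); that is, for each of these complexes F there exists a constant C > 0 with ex(n,F) ≤ C·n³ for all sufficiently large n. -/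
open Filter Asymptotics

/-! ### Auxiliary machinery for the proof -/

/-- The embedding used to find a copy of the forbidden complex. -/
def embedF (p q a b r s : ℕ) : ℕ → ℕ := fun v =>
  if v = 1 then p else if v = 2 then q else if v = 3 then a
  else if v = 4 then b else if v = 5 then r else s

lemma embedF_one (p q a b r s : ℕ) : embedF p q a b r s 1 = p := rfl
lemma embedF_two (p q a b r s : ℕ) : embedF p q a b r s 2 = q := rfl
lemma embedF_three (p q a b r s : ℕ) : embedF p q a b r s 3 = a := rfl
lemma embedF_four (p q a b r s : ℕ) : embedF p q a b r s 4 = b := rfl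
lemma embedF_five (p q a b r s : ℕ) : embedF p q a b r s 5 = r := rfl
lemma embedF_six (p q a b r s : ℕ) : embedF p q a b r s 6 = s := rfl

/-- The seven possible generators. -/
def sevenGens : Finset (Finset ℕ) :=
  {({1,2,3} : Finset ℕ), {4,5,6}, {1,4}, {2,4}, {2,5}, {3,5}, {3,6}}

set_option maxHeartbeats 2000000 in
/-- If `H` is a simplicial complex containing the three 4-edges
`{a,b,p,q}, {a,b,q,r}, {a,b,r,s}` on six distinct vertices, then `H` contains a copy
of the complex generated by any subfamily of `sevenGens`. -/
lemma copy_of_config (H : NatHypergraph) (hSC : IsSimplicialComplex H)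
    (E : Finset (Finset ℕ)) (hE : E ⊆ sevenGens)
    (a b p q r s : ℕ)
    (hab : a ≠ b) (hap : a ≠ p) (haq : a ≠ q) (har : a ≠ r) (has : a ≠ s)
    (hbp : b ≠ p) (hbq : b ≠ q) (hbr : b ≠ r) (hbs : b ≠ s)
    (hpq : p ≠ q) (hpr : p ≠ r) (hps : p ≠ s)
    (hqr : q ≠ r) (hqs : q ≠ s) (hrs : r ≠ s)
    (h1 : ({a,b,p,q} : Finset ℕ) ∈ H.edges)
    (h2 : ({a,b,q,r} : Finset ℕ) ∈ H.edges)
    (h3 : ({a,b,r,s} : Finset ℕ) ∈ H.edges) :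
    H.ContainsCopy (genComplex E) := by
  classical
  have hgen : ∀ g ∈ E, g ⊆ ({1,2,3,4,5,6} : Finset ℕ) := by
    intro g hg
    have hg7 : g ∈ ({({1,2,3}:Finset ℕ),{4,5,6},{1,4},{2,4},{2,5},{3,5},{3,6}} :
        Finset (Finset ℕ)) := hE hg
    simp only [Finset.mem_insert, Finset.mem_singleton] at hg7
    rcases hg7 with rfl|rfl|rfl|rfl|rfl|rfl|rfl <;> decide
  have hv : (genComplex E).verts ⊆ ({1,2,3,4,5,6} : Finset ℕ) := by
    intro x hx
    obtain ⟨g, hg, hxg⟩ := Finset.mem_sup.mp hx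
    exact hgen g hg hxg
  refine ⟨embedF p q a b r s, ?_, ?_, ?_⟩
  · intro x hx y hy hxy
    have hx' : x ∈ ({1,2,3,4,5,6} : Finset ℕ) := hv (by simpa using hx)
    have hy' : y ∈ ({1,2,3,4,5,6} : Finset ℕ) := hv (by simpa using hy)
    simp only [Finset.mem_insert, Finset.mem_singleton] at hx' hy'
    rcases hx' with rfl|rfl|rfl|rfl|rfl|rfl <;> rcases hy' with rfl|rfl|rfl|rfl|rfl|rfl <;>
      first
        | rfl
        | (simp only [embedF_one, embedF_two, embedF_three, embedF_four, embedF_five,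
            embedF_six] at hxy; omega)
  · intro v hvmem
    have hv6 : v ∈ ({1,2,3,4,5,6} : Finset ℕ) := hv hvmem
    have hpv : p ∈ H.verts := H.subset_verts _ h1 (by simp)
    have hqv : q ∈ H.verts := H.subset_verts _ h1 (by simp)
    have hav : a ∈ H.verts := H.subset_verts _ h1 (by simp)
    have hbv : b ∈ H.verts := H.subset_verts _ h1 (by simp)
    have hrv : r ∈ H.verts := H.subset_verts _ h2 (by simp)
    have hsv : s ∈ H.verts := H.subset_verts _ h3 (by simp)
    fin_cases hv6 <;>
      simp only [embedF_one, embedF_two, embedF_three, embedF_four, embedF_five,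
        embedF_six] <;> assumption
  · intro e he
    have hclosed := hSC.2.2
    simp only [genComplex, Finset.mem_insert, Finset.mem_biUnion, Finset.mem_powerset] at he
    rcases he with rfl | ⟨g, hg, heg⟩
    · simpa using hSC.1
    · have hg7 : g ∈ ({({1,2,3}:Finset ℕ),{4,5,6},{1,4},{2,4},{2,5},{3,5},{3,6}} :
          Finset (Finset ℕ)) := hE hg
      simp only [Finset.mem_insert, Finset.mem_singleton] at hg7
      have key : ∃ T ∈ H.edges, g.image (embedF p q a b r s) ⊆ T := by
        rcases hg7 with rfl|rfl|rfl|rfl|rfl|rfl|rfl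
        · refine ⟨_, h1, ?_⟩
          simp only [Finset.image_insert, Finset.image_singleton, embedF_one, embedF_two,
            embedF_three, embedF_four, embedF_five, embedF_six]
          intro x hx; simp only [Finset.mem_insert, Finset.mem_singleton] at hx ⊢; tauto
        · refine ⟨_, h3, ?_⟩
          simp only [Finset.image_insert, Finset.image_singleton, embedF_one, embedF_two,
            embedF_three, embedF_four, embedF_five, embedF_six]
          intro x hx; simp only [Finset.mem_insert, Finset.mem_singleton] at hx ⊢; tauto
        · refine ⟨_, h1, ?_⟩
          simp only [Finset.image_insert, Finset.image_singleton, embedF_one, embedF_two,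
            embedF_three, embedF_four, embedF_five, embedF_six]
          intro x hx; simp only [Finset.mem_insert, Finset.mem_singleton] at hx ⊢; tauto
        · refine ⟨_, h1, ?_⟩
          simp only [Finset.image_insert, Finset.image_singleton, embedF_one, embedF_two,
            embedF_three, embedF_four, embedF_five, embedF_six]
          intro x hx; simp only [Finset.mem_insert, Finset.mem_singleton] at hx ⊢; tauto
        · refine ⟨_, h2, ?_⟩
          simp only [Finset.image_insert, Finset.image_singleton, embedF_one, embedF_two,
            embedF_three, embedF_four, embedF_five, embedF_six]
          intro x hx; simp only [Finset.mem_insert, Finset.mem_singleton] at hx ⊢; tauto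
        · refine ⟨_, h2, ?_⟩
          simp only [Finset.image_insert, Finset.image_singleton, embedF_one, embedF_two,
            embedF_three, embedF_four, embedF_five, embedF_six]
          intro x hx; simp only [Finset.mem_insert, Finset.mem_singleton] at hx ⊢; tauto
        · refine ⟨_, h3, ?_⟩
          simp only [Finset.image_insert, Finset.image_singleton, embedF_one, embedF_two,
            embedF_three, embedF_four, embedF_five, embedF_six]
          intro x hx; simp only [Finset.mem_insert, Finset.mem_singleton] at hx ⊢; tauto
      obtain ⟨T, hT, hsubT⟩ := key
      exact hclosed T hT _ ((Finset.image_subset_image heg).trans hsubT)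


lemma sup_id_mem (e : Finset ℕ) (he : e.Nonempty) : e.sup id ∈ e := by
  obtain ⟨m, hm, hmax⟩ := e.exists_max_image id he
  have h : e.sup id = m := le_antisymm (Finset.sup_le hmax) (Finset.le_sup (f := id) hm)
  rw [h]; exact hm


lemma pair_mem_struct (e : Finset ℕ) (h2 : e.card = 2) (z : ℕ) (hz : z ∈ e) :
    ∃ t, t ≠ z ∧ e = {z, t} := by
  obtain ⟨u, t, hut, rfl⟩ := Finset.card_eq_two.mp h2
  rcases Finset.mem_insert.mp hz with rfl | hz'
  · exact ⟨t, Ne.symm hut, rfl⟩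
  · rw [Finset.mem_singleton] at hz'; subst hz'
    exact ⟨u, hut, Finset.pair_comm u z⟩

lemma graph_bound (V : Finset ℕ) :
    ∀ E : Finset (Finset ℕ), (∀ e ∈ E, e.card = 2) → (∀ e ∈ E, e ⊆ V) →
    (∀ p q r s : ℕ, p ≠ q → p ≠ r → p ≠ s → q ≠ r → q ≠ s → r ≠ s →
      ({p, q} : Finset ℕ) ∈ E → ({q, r} : Finset ℕ) ∈ E → ({r, s} : Finset ℕ) ∈ E → False) →
    E.card ≤ V.card := by
  classical
  induction V using Finset.strongInduction with
  | _ V ih =>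
  intro E hcard hsub hpath
  rcases Finset.eq_empty_or_nonempty E with rfl | ⟨e, he⟩
  · simp
  by_cases hdeg : ∃ v ∈ V, (E.filter (fun e => v ∈ e)).card ≤ 1
  · obtain ⟨v, hvV, hv1⟩ := hdeg
    have hsplit : (E.filter (fun e => v ∈ e)).card + (E.filter (fun e => ¬ v ∈ e)).card
        = E.card := Finset.card_filter_add_card_filter_not _
    have hIH : (E.filter (fun e => ¬ v ∈ e)).card ≤ (V.erase v).card := by
      refine ih _ (Finset.erase_ssubset hvV) _
        (fun e he' => hcard e (Finset.mem_of_mem_filter _ he'))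
        (fun e he' => ?_)
        (fun p q r s h1 h2 h3 h4 h5 h6 m1 m2 m3 =>
          hpath p q r s h1 h2 h3 h4 h5 h6 (Finset.mem_of_mem_filter _ m1)
            (Finset.mem_of_mem_filter _ m2) (Finset.mem_of_mem_filter _ m3))
      have h' := Finset.mem_filter.mp he'
      exact Finset.subset_erase.mpr ⟨hsub e h'.1, h'.2⟩
    have hcV : 1 ≤ V.card := Finset.card_pos.mpr ⟨v, hvV⟩
    have hce : (V.erase v).card = V.card - 1 := Finset.card_erase_of_mem hvV
    omega
  · push_neg at hdeg
    obtain ⟨x, y, hxy, rfl⟩ := Finset.card_eq_two.mp (hcard e he)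
    have hxV : x ∈ V := hsub _ he (by simp)
    have hyV : y ∈ V := hsub _ he (by simp)
    -- neighbor of x other than y
    obtain ⟨e', he'f, he'ne⟩ := Finset.exists_mem_ne
      (s := E.filter (fun e => x ∈ e)) (by have := hdeg x hxV; omega) ({x, y} : Finset ℕ)
    have he'E : e' ∈ E := Finset.mem_of_mem_filter _ he'f
    have hxe' : x ∈ e' := (Finset.mem_filter.mp he'f).2
    obtain ⟨c1, hc1x, rfl⟩ := pair_mem_struct e' (hcard _ he'E) x hxe'
    have hc1y : c1 ≠ y := by rintro rfl; exact he'ne rfl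
    -- neighbor of y other than x
    obtain ⟨e'', he''f, he''ne⟩ := Finset.exists_mem_ne
      (s := E.filter (fun e => y ∈ e)) (by have := hdeg y hyV; omega) ({x, y} : Finset ℕ)
    have he''E : e'' ∈ E := Finset.mem_of_mem_filter _ he''f
    have hye'' : y ∈ e'' := (Finset.mem_filter.mp he''f).2
    obtain ⟨c2, hc2y, rfl⟩ := pair_mem_struct e'' (hcard _ he''E) y hye''
    have hc2x : c2 ≠ x := by
      rintro rfl
      exact he''ne (Finset.pair_comm y c2 ▸ rfl)
    have hceq : c1 = c2 := by
      by_contra hne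
      exact hpath c1 x y c2 hc1x hc1y hne hxy (Ne.symm hc2x) (Ne.symm hc2y)
        (Finset.pair_comm x c1 ▸ he'E) he he''E
    subst hceq
    set c := c1 with hc
    have hcxE : ({x, c} : Finset ℕ) ∈ E := he'E
    have hycE : ({y, c} : Finset ℕ) ∈ E := he''E
    have hcV : c ∈ V := hsub _ hcxE (by simp)
    have hclass : ∀ e0 ∈ E, (x ∈ e0 ∨ y ∈ e0 ∨ c ∈ e0) →
        (e0 = {x, y} ∨ e0 = {x, c} ∨ e0 = {y, c}) := by
      intro e0 he0 hm
      rcases hm with hx0 | hy0 | hc0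
      · obtain ⟨t, htx, rfl⟩ := pair_mem_struct e0 (hcard _ he0) x hx0
        by_cases hty : t = y
        · rw [hty]; exact Or.inl rfl
        by_cases htc : t = c
        · rw [htc]; exact Or.inr (Or.inl rfl)
        exact absurd (hpath t x y c htx hty htc hxy (Ne.symm hc1x) (Ne.symm hc1y)
          (Finset.pair_comm x t ▸ he0) he hycE) (by simp)
      · obtain ⟨t, hty, rfl⟩ := pair_mem_struct e0 (hcard _ he0) y hy0
        by_cases htx : t = x
        · rw [htx]; exact Or.inl (Finset.pair_comm y x)
        by_cases htc : t = c
        · rw [htc]; exact Or.inr (Or.inr rfl)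
        exact absurd (hpath t y x c hty htx htc (Ne.symm hxy) (Ne.symm hc1y) (Ne.symm hc1x)
          (Finset.pair_comm y t ▸ he0) (Finset.pair_comm x y ▸ he) hcxE) (by simp)
      · obtain ⟨t, htc, rfl⟩ := pair_mem_struct e0 (hcard _ he0) c hc0
        by_cases htx : t = x
        · rw [htx]; exact Or.inr (Or.inl (Finset.pair_comm c x))
        by_cases hty : t = y
        · rw [hty]; exact Or.inr (Or.inr (Finset.pair_comm c y))
        exact absurd (hpath t c x y htc htx hty hc1x hc1y hxy
          (Finset.pair_comm c t ▸ he0) (Finset.pair_comm x c ▸ hcxE) he) (by simp)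
    have hne1 : ({x, y} : Finset ℕ) ≠ {x, c} := by
      intro h
      have : c ∈ ({x, y} : Finset ℕ) := h ▸ (by simp : c ∈ ({x, c} : Finset ℕ))
      simp only [Finset.mem_insert, Finset.mem_singleton] at this
      rcases this with h' | h'
      · exact hc1x h'
      · exact hc1y h'
    have hne2 : ({x, y} : Finset ℕ) ≠ {y, c} := by
      intro h
      have : c ∈ ({x, y} : Finset ℕ) := h ▸ (by simp : c ∈ ({y, c} : Finset ℕ))
      simp only [Finset.mem_insert, Finset.mem_singleton] at this
      rcases this with h' | h'
      · exact hc1x h'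
      · exact hc1y h'
    have hne3 : ({x, c} : Finset ℕ) ≠ {y, c} := by
      intro h
      have : x ∈ ({y, c} : Finset ℕ) := h ▸ (by simp : x ∈ ({x, c} : Finset ℕ))
      simp only [Finset.mem_insert, Finset.mem_singleton] at this
      rcases this with h' | h'
      · exact hxy h'
      · exact hc1x h'.symm
    have hfilter : E.filter (fun e0 => x ∈ e0 ∨ y ∈ e0 ∨ c ∈ e0)
        = ({({x,y} : Finset ℕ), {x,c}, {y,c}} : Finset (Finset ℕ)) := by
      ext e0
      simp only [Finset.mem_filter, Finset.mem_insert, Finset.mem_singleton]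
      constructor
      · rintro ⟨he0, hm⟩; exact hclass e0 he0 hm
      · rintro (rfl | rfl | rfl)
        · exact ⟨he, by simp⟩
        · exact ⟨hcxE, by simp⟩
        · exact ⟨hycE, by simp⟩
    have hTcard : ({({x,y} : Finset ℕ), {x,c}, {y,c}} : Finset (Finset ℕ)).card = 3 := by
      rw [Finset.card_insert_of_notMem (by simp [hne1, hne2]),
        Finset.card_insert_of_notMem (by simp [hne3]), Finset.card_singleton]
    have hsplit : (E.filter (fun e0 => x ∈ e0 ∨ y ∈ e0 ∨ c ∈ e0)).card
        + (E.filter (fun e0 => ¬ (x ∈ e0 ∨ y ∈ e0 ∨ c ∈ e0))).card = E.card :=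
      Finset.card_filter_add_card_filter_not _
    have hxyc : ({x, y, c} : Finset ℕ) ⊆ V := by
      intro z hz
      simp only [Finset.mem_insert, Finset.mem_singleton] at hz
      rcases hz with rfl | rfl | rfl <;> assumption
    have hxycc : ({x, y, c} : Finset ℕ).card = 3 :=
      Finset.card_eq_three.mpr ⟨x, y, c, hxy, hc1x.symm, hc1y.symm, rfl⟩
    have hVss : V \ ({x, y, c} : Finset ℕ) ⊂ V :=
      Finset.sdiff_ssubset hxyc (by simp)
    have hIH : (E.filter (fun e0 => ¬ (x ∈ e0 ∨ y ∈ e0 ∨ c ∈ e0))).card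
        ≤ (V \ ({x, y, c} : Finset ℕ)).card := by
      refine ih _ hVss _
        (fun e0 he0 => hcard e0 (Finset.mem_of_mem_filter _ he0))
        (fun e0 he0 => ?_)
        (fun p q r s h1 h2 h3 h4 h5 h6 m1 m2 m3 =>
          hpath p q r s h1 h2 h3 h4 h5 h6 (Finset.mem_of_mem_filter _ m1)
            (Finset.mem_of_mem_filter _ m2) (Finset.mem_of_mem_filter _ m3))
      have h' := Finset.mem_filter.mp he0
      push_neg at h'
      intro z hz
      rw [Finset.mem_sdiff]
      refine ⟨hsub _ h'.1 hz, ?_⟩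
      simp only [Finset.mem_insert, Finset.mem_singleton]
      rintro (rfl | rfl | rfl)
      · exact h'.2.1 hz
      · exact h'.2.2.1 hz
      · exact h'.2.2.2 hz
    have hVc : (V \ ({x, y, c} : Finset ℕ)).card = V.card - 3 := by
      rw [Finset.card_sdiff_of_subset hxyc, hxycc]
    have h3V : 3 ≤ V.card := by
      calc 3 = ({x, y, c} : Finset ℕ).card := hxycc.symm
        _ ≤ V.card := Finset.card_le_card hxyc
    rw [hfilter, hTcard] at hsplit
    omega


set_option maxHeartbeats 1000000 in
lemma edges_bound (H : NatHypergraph) (hSC : IsSimplicialComplex H)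
    (hfree : ∀ a b p q r s : ℕ, a ≠ b → a ≠ p → a ≠ q → a ≠ r → a ≠ s → b ≠ p → b ≠ q →
      b ≠ r → b ≠ s → p ≠ q → p ≠ r → p ≠ s → q ≠ r → q ≠ s → r ≠ s →
      ({a,b,p,q} : Finset ℕ) ∈ H.edges → ({a,b,q,r} : Finset ℕ) ∈ H.edges →
      ({a,b,r,s} : Finset ℕ) ∈ H.edges → False)
    (hn : 1 ≤ H.verts.card) :
    H.edges.card ≤ 6 * H.verts.card ^ 3 := by
  classical
  set n := H.verts.card with hndef
  have hclosed := hSC.2.2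
  -- no edge has more than 5 vertices
  have hle5 : ∀ e ∈ H.edges, e.card ≤ 5 := by
    intro e heE
    by_contra hgt
    push_neg at hgt
    obtain ⟨t, hts, htc⟩ := Finset.exists_subset_card_eq (show 6 ≤ e.card by omega)
    obtain ⟨x1, hx1⟩ := Finset.card_pos.mp (show 0 < t.card by omega)
    obtain ⟨x2, hx2⟩ := Finset.card_pos.mp (show 0 < (t.erase x1).card by
      rw [Finset.card_erase_of_mem hx1]; omega)
    have hx2' := Finset.mem_erase.mp hx2
    obtain ⟨x3, hx3⟩ := Finset.card_pos.mp (show 0 < ((t.erase x1).erase x2).card by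
      rw [Finset.card_erase_of_mem hx2, Finset.card_erase_of_mem hx1]; omega)
    have hx3a := Finset.mem_erase.mp hx3
    have hx3b := Finset.mem_erase.mp hx3a.2
    obtain ⟨x4, hx4⟩ := Finset.card_pos.mp
      (show 0 < (((t.erase x1).erase x2).erase x3).card by
        rw [Finset.card_erase_of_mem hx3, Finset.card_erase_of_mem hx2,
          Finset.card_erase_of_mem hx1]; omega)
    have hx4a := Finset.mem_erase.mp hx4
    have hx4b := Finset.mem_erase.mp hx4a.2
    have hx4c := Finset.mem_erase.mp hx4b.2
    obtain ⟨x5, hx5⟩ := Finset.card_pos.mp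
      (show 0 < ((((t.erase x1).erase x2).erase x3).erase x4).card by
        rw [Finset.card_erase_of_mem hx4, Finset.card_erase_of_mem hx3,
          Finset.card_erase_of_mem hx2, Finset.card_erase_of_mem hx1]; omega)
    have hx5a := Finset.mem_erase.mp hx5
    have hx5b := Finset.mem_erase.mp hx5a.2
    have hx5c := Finset.mem_erase.mp hx5b.2
    have hx5d := Finset.mem_erase.mp hx5c.2
    obtain ⟨x6, hx6⟩ := Finset.card_pos.mp
      (show 0 < (((((t.erase x1).erase x2).erase x3).erase x4).erase x5).card by
        rw [Finset.card_erase_of_mem hx5, Finset.card_erase_of_mem hx4,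
          Finset.card_erase_of_mem hx3, Finset.card_erase_of_mem hx2,
          Finset.card_erase_of_mem hx1]; omega)
    have hx6a := Finset.mem_erase.mp hx6
    have hx6b := Finset.mem_erase.mp hx6a.2
    have hx6c := Finset.mem_erase.mp hx6b.2
    have hx6d := Finset.mem_erase.mp hx6c.2
    have hx6e := Finset.mem_erase.mp hx6d.2
    have m1 : x1 ∈ e := hts hx1
    have m2 : x2 ∈ e := hts hx2'.2
    have m3 : x3 ∈ e := hts hx3b.2
    have m4 : x4 ∈ e := hts hx4c.2
    have m5 : x5 ∈ e := hts hx5d.2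
    have m6 : x6 ∈ e := hts hx6e.2
    have q1 : ({x1, x2, x3, x4} : Finset ℕ) ∈ H.edges := by
      refine hclosed e heE _ ?_
      simp only [Finset.insert_subset_iff, Finset.singleton_subset_iff]
      exact ⟨m1, m2, m3, m4⟩
    have q2 : ({x1, x2, x4, x5} : Finset ℕ) ∈ H.edges := by
      refine hclosed e heE _ ?_
      simp only [Finset.insert_subset_iff, Finset.singleton_subset_iff]
      exact ⟨m1, m2, m4, m5⟩
    have q3 : ({x1, x2, x5, x6} : Finset ℕ) ∈ H.edges := by
      refine hclosed e heE _ ?_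
      simp only [Finset.insert_subset_iff, Finset.singleton_subset_iff]
      exact ⟨m1, m2, m5, m6⟩
    exact hfree x1 x2 x3 x4 x5 x6 (Ne.symm hx2'.1) (Ne.symm hx3b.1) (Ne.symm hx4c.1)
      (Ne.symm hx5d.1) (Ne.symm hx6e.1) (Ne.symm hx3a.1) (Ne.symm hx4b.1) (Ne.symm hx5c.1)
      (Ne.symm hx6d.1) (Ne.symm hx4a.1) (Ne.symm hx5b.1) (Ne.symm hx6c.1) (Ne.symm hx5a.1)
      (Ne.symm hx6b.1) (Ne.symm hx6a.1) q1 q2 q3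
  -- the 4-edges through a fixed pair form a path-free graph
  have hpair : ∀ a b : ℕ, a ≠ b →
      (H.edges.filter fun e => e.card = 4 ∧ a ∈ e ∧ b ∈ e).card ≤ n := by
    intro a b hab
    set S := H.edges.filter fun e => e.card = 4 ∧ a ∈ e ∧ b ∈ e with hS
    have habsub : ∀ e ∈ S, ({a, b} : Finset ℕ) ⊆ e := by
      intro e heS
      have h := (Finset.mem_filter.mp heS).2
      intro z hz
      simp only [Finset.mem_insert, Finset.mem_singleton] at hz
      rcases hz with rfl | rfl
      exacts [h.2.1, h.2.2]
    have hrec : ∀ e ∈ S, e = (e \ {a, b}) ∪ {a, b} := fun e heS =>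
      (Finset.sdiff_union_of_subset (habsub e heS)).symm
    have hinj : Set.InjOn (fun e => e \ ({a, b} : Finset ℕ)) S := by
      intro e1 h1 e2 h2 h12
      rw [hrec e1 (Finset.mem_coe.mp h1), hrec e2 (Finset.mem_coe.mp h2)]
      simp only at h12
      rw [h12]
    have hcard : S.card = (S.image fun e => e \ ({a,b} : Finset ℕ)).card :=
      (Finset.card_image_of_injOn hinj).symm
    rw [hcard]
    refine graph_bound H.verts _ ?_ ?_ ?_
    · intro e' he'
      obtain ⟨e, heS, rfl⟩ := Finset.mem_image.mp he'
      have h := (Finset.mem_filter.mp heS).2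
      rw [Finset.card_sdiff_of_subset (habsub e heS), h.1, Finset.card_pair hab]
    · intro e' he'
      obtain ⟨e, heS, rfl⟩ := Finset.mem_image.mp he'
      exact Finset.sdiff_subset.trans (H.subset_verts e (Finset.mem_of_mem_filter _ heS))
    · intro p q r s h1 h2 h3 h4 h5 h6 mm1 mm2 mm3
      obtain ⟨e1, he1S, heq1⟩ := Finset.mem_image.mp mm1
      obtain ⟨e2, he2S, heq2⟩ := Finset.mem_image.mp mm2
      obtain ⟨e3, he3S, heq3⟩ := Finset.mem_image.mp mm3
      have hpab : p ∈ e1 \ ({a,b} : Finset ℕ) := by rw [heq1]; simp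
      have hqab : q ∈ e1 \ ({a,b} : Finset ℕ) := by rw [heq1]; simp
      have hrab : r ∈ e2 \ ({a,b} : Finset ℕ) := by rw [heq2]; simp
      have hsab : s ∈ e3 \ ({a,b} : Finset ℕ) := by rw [heq3]; simp
      have hp' := Finset.mem_sdiff.mp hpab
      have hq' := Finset.mem_sdiff.mp hqab
      have hr' := Finset.mem_sdiff.mp hrab
      have hs' := Finset.mem_sdiff.mp hsab
      simp only [Finset.mem_insert, Finset.mem_singleton, not_or] at hp' hq' hr' hs'
      have hq1 : ({a, b, p, q} : Finset ℕ) ∈ H.edges := by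
        have he1' : e1 = ({p, q} : Finset ℕ) ∪ {a, b} := by
          rw [hrec e1 he1S, heq1]
        have heq : ({a, b, p, q} : Finset ℕ) = e1 := by
          rw [he1']; ext z
          simp only [Finset.mem_insert, Finset.mem_singleton, Finset.mem_union]
          tauto
        rw [heq]; exact Finset.mem_of_mem_filter _ he1S
      have hq2 : ({a, b, q, r} : Finset ℕ) ∈ H.edges := by
        have he2' : e2 = ({q, r} : Finset ℕ) ∪ {a, b} := by
          rw [hrec e2 he2S, heq2]
        have heq : ({a, b, q, r} : Finset ℕ) = e2 := by
          rw [he2']; ext z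
          simp only [Finset.mem_insert, Finset.mem_singleton, Finset.mem_union]
          tauto
        rw [heq]; exact Finset.mem_of_mem_filter _ he2S
      have hq3 : ({a, b, r, s} : Finset ℕ) ∈ H.edges := by
        have he3' : e3 = ({r, s} : Finset ℕ) ∪ {a, b} := by
          rw [hrec e3 he3S, heq3]
        have heq : ({a, b, r, s} : Finset ℕ) = e3 := by
          rw [he3']; ext z
          simp only [Finset.mem_insert, Finset.mem_singleton, Finset.mem_union]
          tauto
        rw [heq]; exact Finset.mem_of_mem_filter _ he3S
      exact hfree a b p q r s hab (Ne.symm hp'.2.1) (Ne.symm hq'.2.1) (Ne.symm hr'.2.1)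
        (Ne.symm hs'.2.1) (Ne.symm hp'.2.2) (Ne.symm hq'.2.2) (Ne.symm hr'.2.2)
        (Ne.symm hs'.2.2) h1 h2 h3 h4 h5 h6 hq1 hq2 hq3
  -- the number of 4-edges is at most n^3
  have h4 : (H.edges.filter fun e => e.card = 4).card ≤ n ^ 3 := by
    set P : Finset (ℕ × ℕ) := (H.verts ×ˢ H.verts).filter (fun ab => ab.1 ≠ ab.2) with hP
    have hsubB : (H.edges.filter fun e => e.card = 4) ⊆
        P.biUnion (fun ab => H.edges.filter fun e => e.card = 4 ∧ ab.1 ∈ e ∧ ab.2 ∈ e) := by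
      intro e heS
      have h := Finset.mem_filter.mp heS
      obtain ⟨a, ha, b, hb, hab⟩ := Finset.one_lt_card.mp (show 1 < e.card by rw [h.2]; norm_num)
      refine Finset.mem_biUnion.mpr ⟨(a, b), ?_, ?_⟩
      · exact Finset.mem_filter.mpr ⟨Finset.mem_product.mpr ⟨H.subset_verts _ h.1 ha,
          H.subset_verts _ h.1 hb⟩, hab⟩
      · exact Finset.mem_filter.mpr ⟨h.1, h.2, ha, hb⟩
    have hPn : P.card ≤ n * n := by
      calc P.card ≤ (H.verts ×ˢ H.verts).card := Finset.card_filter_le _ _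
        _ = n * n := by rw [Finset.card_product]
    calc (H.edges.filter fun e => e.card = 4).card
        ≤ (P.biUnion (fun ab => H.edges.filter fun e =>
            e.card = 4 ∧ ab.1 ∈ e ∧ ab.2 ∈ e)).card := Finset.card_le_card hsubB
      _ ≤ ∑ ab ∈ P, (H.edges.filter fun e => e.card = 4 ∧ ab.1 ∈ e ∧ ab.2 ∈ e).card :=
          Finset.card_biUnion_le
      _ ≤ P.card • n := Finset.sum_le_card_nsmul _ _ _
          (fun ab hab => hpair ab.1 ab.2 (Finset.mem_filter.mp hab).2)
      _ ≤ (n * n) * n := by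
          rw [smul_eq_mul]
          exact Nat.mul_le_mul_right n hPn
      _ = n ^ 3 := by ring
  -- the number of 5-edges is at most the number of 4-edges
  have h5 : (H.edges.filter fun e => e.card = 5).card
      ≤ (H.edges.filter fun e => e.card = 4).card := by
    refine Finset.card_le_card_of_injOn (fun e => e.erase (e.sup id)) ?_ ?_
    · intro e heS
      have h := Finset.mem_filter.mp heS
      have hne : e.Nonempty := Finset.card_pos.mp (by rw [h.2]; norm_num)
      have hmem : e.sup id ∈ e := sup_id_mem e hne
      refine Finset.mem_filter.mpr ⟨hclosed e h.1 _ (Finset.erase_subset _ _), ?_⟩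
      rw [Finset.card_erase_of_mem hmem, h.2]
    · intro e1 h1' e2 h2' heq
      by_contra hne12
      have h1 := Finset.mem_filter.mp (Finset.mem_coe.mp h1')
      have h2 := Finset.mem_filter.mp (Finset.mem_coe.mp h2')
      have hm1 : e1.sup id ∈ e1 := sup_id_mem e1 (Finset.card_pos.mp (by rw [h1.2]; norm_num))
      have hm2 : e2.sup id ∈ e2 := sup_id_mem e2 (Finset.card_pos.mp (by rw [h2.2]; norm_num))
      simp only at heq
      have hm12 : e1.sup id ≠ e2.sup id := by
        intro h
        apply hne12
        rw [← Finset.insert_erase hm1, ← Finset.insert_erase hm2, heq, h]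
      have hm1e2 : e1.sup id ∉ e2 := by
        intro hmem2
        have hh : e1.sup id ∈ e2.erase (e2.sup id) := Finset.mem_erase.mpr ⟨hm12, hmem2⟩
        rw [← heq] at hh
        exact (Finset.mem_erase.mp hh).1 rfl
      have hm2e1 : e2.sup id ∉ e1 := by
        intro hmem1
        have hh : e2.sup id ∈ e1.erase (e1.sup id) :=
          Finset.mem_erase.mpr ⟨Ne.symm hm12, hmem1⟩
        rw [heq] at hh
        exact (Finset.mem_erase.mp hh).1 rfl
      set d := e1.erase (e1.sup id) with hdd
      have hdcard : d.card = 4 := by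
        rw [hdd, Finset.card_erase_of_mem hm1, h1.2]
      have hde1 : d ⊆ e1 := Finset.erase_subset _ _
      have hde2 : d ⊆ e2 := by rw [heq]; exact Finset.erase_subset _ _
      obtain ⟨x1, hx1⟩ := Finset.card_pos.mp (show 0 < d.card by omega)
      obtain ⟨x2, hx2⟩ := Finset.card_pos.mp (show 0 < (d.erase x1).card by
        rw [Finset.card_erase_of_mem hx1]; omega)
      have hx2' := Finset.mem_erase.mp hx2
      obtain ⟨x3, hx3⟩ := Finset.card_pos.mp (show 0 < ((d.erase x1).erase x2).card by
        rw [Finset.card_erase_of_mem hx2, Finset.card_erase_of_mem hx1]; omega)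
      have hx3a := Finset.mem_erase.mp hx3
      have hx3b := Finset.mem_erase.mp hx3a.2
      obtain ⟨x4, hx4⟩ := Finset.card_pos.mp
        (show 0 < (((d.erase x1).erase x2).erase x3).card by
          rw [Finset.card_erase_of_mem hx3, Finset.card_erase_of_mem hx2,
            Finset.card_erase_of_mem hx1]; omega)
      have hx4a := Finset.mem_erase.mp hx4
      have hx4b := Finset.mem_erase.mp hx4a.2
      have hx4c := Finset.mem_erase.mp hx4b.2
      have md1 : x1 ∈ d := hx1
      have md2 : x2 ∈ d := hx2'.2
      have md3 : x3 ∈ d := hx3b.2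
      have md4 : x4 ∈ d := hx4c.2
      have hmx : ∀ z ∈ d, z ≠ e1.sup id ∧ z ≠ e2.sup id := by
        intro z hz
        constructor
        · rw [hdd] at hz
          exact (Finset.mem_erase.mp hz).1
        · intro hzz
          rw [hzz] at hz
          exact hm2e1 (hde1 hz)
      have q1 : ({x1, x2, e1.sup id, x3} : Finset ℕ) ∈ H.edges := by
        refine hclosed e1 h1.1 _ ?_
        simp only [Finset.insert_subset_iff, Finset.singleton_subset_iff]
        exact ⟨hde1 md1, hde1 md2, hm1, hde1 md3⟩
      have q2 : ({x1, x2, x3, x4} : Finset ℕ) ∈ H.edges := by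
        refine hclosed e1 h1.1 _ ?_
        simp only [Finset.insert_subset_iff, Finset.singleton_subset_iff]
        exact ⟨hde1 md1, hde1 md2, hde1 md3, hde1 md4⟩
      have q3 : ({x1, x2, x4, e2.sup id} : Finset ℕ) ∈ H.edges := by
        refine hclosed e2 h2.1 _ ?_
        simp only [Finset.insert_subset_iff, Finset.singleton_subset_iff]
        exact ⟨hde2 md1, hde2 md2, hde2 md4, hm2⟩
      exact hfree x1 x2 (e1.sup id) x3 x4 (e2.sup id) (Ne.symm hx2'.1)
        ((hmx x1 md1).1) (Ne.symm hx3b.1) (Ne.symm hx4c.1) ((hmx x1 md1).2)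
        ((hmx x2 md2).1) (Ne.symm hx3a.1) (Ne.symm hx4b.1) ((hmx x2 md2).2)
        (Ne.symm ((hmx x3 md3).1)) (Ne.symm ((hmx x4 md4).1)) hm12
        (Ne.symm hx4a.1) ((hmx x3 md3).2) ((hmx x4 md4).2) q1 q2 q3
  -- put the pieces together
  have hbU : H.edges ⊆ (Finset.range 6).biUnion
      (fun k => H.edges.filter fun e => e.card = k) := by
    intro e heE
    exact Finset.mem_biUnion.mpr ⟨e.card, Finset.mem_range.mpr (by have := hle5 e heE; omega),
      Finset.mem_filter.mpr ⟨heE, rfl⟩⟩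
  have hbin : ∀ k ∈ Finset.range 6, (H.edges.filter fun e => e.card = k).card ≤ n ^ 3 := by
    intro k hk
    have hk6 := Finset.mem_range.mp hk
    by_cases hk4 : k = 4
    · subst hk4; exact h4
    by_cases hk5 : k = 5
    · subst hk5; exact le_trans h5 h4
    have hk3 : k ≤ 3 := by omega
    have hsubP : (H.edges.filter fun e => e.card = k) ⊆ H.verts.powersetCard k := by
      intro e heS
      have h := Finset.mem_filter.mp heS
      exact Finset.mem_powersetCard.mpr ⟨H.subset_verts _ h.1, h.2⟩
    calc (H.edges.filter fun e => e.card = k).card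
        ≤ (H.verts.powersetCard k).card := Finset.card_le_card hsubP
      _ = n.choose k := by rw [Finset.card_powersetCard]
      _ ≤ n ^ k := Nat.choose_le_pow n k
      _ ≤ n ^ 3 := Nat.pow_le_pow_right (by omega) hk3
  calc H.edges.card
      ≤ ((Finset.range 6).biUnion (fun k => H.edges.filter fun e => e.card = k)).card :=
        Finset.card_le_card hbU
    _ ≤ ∑ k ∈ Finset.range 6, (H.edges.filter fun e => e.card = k).card :=
        Finset.card_biUnion_le
    _ ≤ (Finset.range 6).card • n ^ 3 := Finset.sum_le_card_nsmul _ _ _ hbin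
    _ = 6 * n ^ 3 := by rw [Finset.card_range, smul_eq_mul]


theorem matching_plus_long_paths :
    (∃ C : ℝ, 0 < C ∧ ∀ᶠ n in Filter.atTop,
        (exSC n (genComplex
            {({1,2,3} : Finset ℕ), {4,5,6}, {1,4}, {2,4}, {2,5}, {3,5}}) : ℝ) ≤
          C * (n : ℝ) ^ 3) ∧
    ∃ C : ℝ, 0 < C ∧ ∀ᶠ n in Filter.atTop,
        (exSC n (genComplex
            {({1,2,3} : Finset ℕ), {4,5,6}, {1,4}, {2,4}, {2,5}, {3,5}, {3,6}}) : ℝ) ≤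
          C * (n : ℝ) ^ 3 := by
  have main : ∀ E : Finset (Finset ℕ), E ⊆ sevenGens →
      ∃ C : ℝ, 0 < C ∧ ∀ᶠ n in Filter.atTop,
        (exSC n (genComplex E) : ℝ) ≤ C * (n : ℝ) ^ 3 := by
    intro E hE
    refine ⟨6, by norm_num, ?_⟩
    filter_upwards [Filter.eventually_ge_atTop 1] with n hn
    have hnat : exSC n (genComplex E) ≤ 6 * n ^ 3 := by
      apply csSup_le'
      rw [mem_upperBounds]
      rintro m ⟨H, hSC, hcardV, hncopy, rfl⟩
      have hfree : ∀ a b p q r s : ℕ, a ≠ b → a ≠ p → a ≠ q → a ≠ r → a ≠ s → b ≠ p →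
          b ≠ q → b ≠ r → b ≠ s → p ≠ q → p ≠ r → p ≠ s → q ≠ r → q ≠ s → r ≠ s →
          ({a,b,p,q} : Finset ℕ) ∈ H.edges → ({a,b,q,r} : Finset ℕ) ∈ H.edges →
          ({a,b,r,s} : Finset ℕ) ∈ H.edges → False := by
        intro a b p q r s hab hap haq har has hbp hbq hbr hbs hpq hpr hps hqr hqs hrs h1 h2 h3
        exact hncopy (copy_of_config H hSC E hE a b p q r s hab hap haq har has hbp hbq hbr
          hbs hpq hpr hps hqr hqs hrs h1 h2 h3)
      calc H.edges.card ≤ 6 * H.verts.card ^ 3 :=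
            edges_bound H hSC hfree (by rw [hcardV]; exact hn)
        _ = 6 * n ^ 3 := by rw [hcardV]
    calc (exSC n (genComplex E) : ℝ) ≤ ((6 * n ^ 3 : ℕ) : ℝ) := by exact_mod_cast hnat
      _ = 6 * (n : ℝ) ^ 3 := by push_cast; ring
  constructor
  · refine main _ ?_
    intro g hg
    simp only [sevenGens, Finset.mem_insert, Finset.mem_singleton] at hg ⊢
    tauto
  · exact main _ (Finset.Subset.refl _)
end
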